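/- arXiv:1205.5085 — 5 statements merged into one kernel-verified Lean document; each statement's English description precedes it below -/
import Mathlib

section
/- The set of polynomials p (with complex coefficients) satisfying p(1) = p(-1) = 0 is dense in the weighted Hilbert space L²((-1,1); (1-x²)^{-1}dx). Equivalently, the Jacobi polynomials {P_n^{(-1,-1)}}_{n≥2} of degree ≥ 2 form a complete orthogonal set in L²((-1,1); (1-x²)^{-1}dx). -/
/-!
Put `ν = (1 - x²) dx` on `(-1, 1)` and `u = f / (1 - x²)`. Then
`∫ |f - (1 - x²) q|² / (1 - x²) dx = ∫ |u - q|² dν`, and `u ∈ L²(ν)` is exactly the hypothesis on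
`f`. As `ν` is a finite measure carried by `[-1, 1]`, bounded continuous functions are dense in
`L²(ν)`, and by Weierstrass they are uniform, hence `L²(ν)`, limits of polynomials `q`. The
polynomial `p = (1 - x²) q` then vanishes at `±1`.
-/

open MeasureTheory Set Polynomial
open scoped ENNReal

section WithDensityOfReal

variable {α E : Type*} [MeasurableSpace α] {μ : Measure α} [NormedAddCommGroup E]
  [NormedSpace ℝ E] {w : α → ℝ} {s : Set α}

theorem integral_restrict_withDensity_ofReal (hw : Measurable w) (hs : MeasurableSet s)
    (hw₀ : ∀ x ∈ s, 0 ≤ w x) (g : α → E) :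
    ∫ x, g x ∂(μ.restrict s).withDensity (fun x => .ofReal (w x)) = ∫ x in s, w x • g x ∂μ := by
  rw [integral_withDensity_eq_integral_toReal_smul hw.ennreal_ofReal
    (ae_of_all _ fun _ => ENNReal.ofReal_lt_top)]
  exact setIntegral_congr_fun hs fun x hx => by rw [ENNReal.toReal_ofReal (hw₀ x hx)]

theorem integrable_restrict_withDensity_ofReal_iff (hw : Measurable w) (hs : MeasurableSet s)
    (hw₀ : ∀ x ∈ s, 0 ≤ w x) {g : α → E} :
    Integrable g ((μ.restrict s).withDensity fun x => .ofReal (w x)) ↔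
      IntegrableOn (fun x => w x • g x) s μ := by
  rw [integrable_withDensity_iff_integrable_smul' hw.ennreal_ofReal
    (ae_of_all _ fun _ => ENNReal.ofReal_lt_top)]
  exact integrableOn_congr_fun (fun x hx => by rw [ENNReal.toReal_ofReal (hw₀ x hx)]) hs

end WithDensityOfReal

theorem mul_norm_inv_smul_sub_sq {E : Type*} [NormedAddCommGroup E] [NormedSpace ℝ E] {r : ℝ}
    (hr : 0 < r) (z w : E) : r * ‖r⁻¹ • z - w‖ ^ 2 = ‖z - r • w‖ ^ 2 * r⁻¹ := by
  have : z - r • w = r • (r⁻¹ • z - w) := by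
    rw [smul_sub, smul_inv_smul₀ hr.ne']
  rw [this, norm_smul, Real.norm_of_nonneg hr.le]
  field_simp

theorem RCLike.exists_polynomial_near_of_continuousOn {𝕜 : Type*} [RCLike 𝕜] (a b : ℝ)
    (g : ℝ → 𝕜) (hg : ContinuousOn g (Icc a b)) (η : ℝ) (hη : 0 < η) :
    ∃ q : 𝕜[X], ∀ x ∈ Icc a b, ‖q.eval (x : 𝕜) - g x‖ < η := by
  obtain ⟨qre, hqre⟩ := _root_.exists_polynomial_near_of_continuousOn a b (fun x => RCLike.re (g x))
    (RCLike.continuous_re.comp_continuousOn hg) (η / 2) (by positivity)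
  obtain ⟨qim, hqim⟩ := _root_.exists_polynomial_near_of_continuousOn a b (fun x => RCLike.im (g x))
    (RCLike.continuous_im.comp_continuousOn hg) (η / 2) (by positivity)
  refine ⟨qre.map (algebraMap ℝ 𝕜) + C RCLike.I * qim.map (algebraMap ℝ 𝕜), fun x hx => ?_⟩
  have hI : ‖(RCLike.I : 𝕜)‖ ≤ 1 := by rw [RCLike.norm_I]; split_ifs <;> norm_num
  have hsplit : eval (x : 𝕜) (qre.map (algebraMap ℝ 𝕜) + C RCLike.I * qim.map (algebraMap ℝ 𝕜))
      - g x = ((qre.eval x - RCLike.re (g x) : ℝ) : 𝕜)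
        + ((qim.eval x - RCLike.im (g x) : ℝ) : 𝕜) * RCLike.I := by
    conv_lhs => rw [← RCLike.re_add_im (g x)]
    simp only [eval_add, eval_mul, eval_C, eval_map_algebraMap,
      aeval_algebraMap_apply_eq_algebraMap_eval, RCLike.algebraMap_eq_ofReal, RCLike.ofReal_sub]
    ring
  calc _ ≤ |qre.eval x - RCLike.re (g x)|
          + |qim.eval x - RCLike.im (g x)| * ‖(RCLike.I : 𝕜)‖ := by
        rw [hsplit]
        refine (norm_add_le _ _).trans_eq ?_
        rw [norm_mul, RCLike.norm_ofReal, RCLike.norm_ofReal]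
    _ ≤ |qre.eval x - RCLike.re (g x)| + |qim.eval x - RCLike.im (g x)| := by
        gcongr
        exact mul_le_of_le_one_right (abs_nonneg _) hI
    _ < η / 2 + η / 2 := add_lt_add (hqre x hx) (hqim x hx)
    _ = η := add_halves η

theorem MeasureTheory.MemLp.exists_polynomial_eLpNorm_sub_lt {𝕜 : Type*} [RCLike 𝕜]
    {ν : Measure ℝ} [IsFiniteMeasure ν] {a b : ℝ} (hν : ∀ᵐ x ∂ν, x ∈ Icc a b) {p : ℝ≥0∞}
    (hp₁ : 1 ≤ p) (hp : p ≠ ∞) {u : ℝ → 𝕜} (hu : MemLp u p ν) {δ : ℝ≥0∞} (hδ : δ ≠ 0) :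
    ∃ q : 𝕜[X], eLpNorm (fun x => u x - q.eval (x : 𝕜)) p ν < δ := by
  obtain ⟨g, hug, hg⟩ := hu.exists_boundedContinuous_eLpNorm_sub_le hp (ENNReal.half_pos hδ).ne'
  obtain ⟨η, hη, hηδ⟩ := ENNReal.exists_nnreal_pos_mul_lt
    (ENNReal.rpow_ne_top_of_nonneg (inv_nonneg.2 ENNReal.toReal_nonneg) (measure_ne_top ν univ))
    (ENNReal.half_pos hδ).ne'
  obtain ⟨q, hq⟩ := RCLike.exists_polynomial_near_of_continuousOn a b g
    g.continuous.continuousOn η hη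
  have hgq : eLpNorm (fun x => g x - q.eval (x : 𝕜)) p ν < δ / 2 := by
    refine (eLpNorm_le_of_ae_bound (C := η) ?_).trans_lt ?_
    · filter_upwards [hν] with x hx
      rw [norm_sub_rev]
      exact (hq x hx).le
    · rwa [ENNReal.ofReal_coe_nnreal, mul_comm]
  refine ⟨q, ?_⟩
  calc eLpNorm (fun x => u x - q.eval (x : 𝕜)) p ν
      = eLpNorm ((u - ⇑g) + fun x => g x - q.eval (x : 𝕜)) p ν := by
        congr 1; ext x; simp
    _ ≤ eLpNorm (u - ⇑g) p ν + eLpNorm (fun x => g x - q.eval (x : 𝕜)) p ν :=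
        eLpNorm_add_le (hu.sub hg).1 (by fun_prop) hp₁
    _ < δ / 2 + δ / 2 := ENNReal.add_lt_add_of_le_of_lt (hu.sub hg).eLpNorm_ne_top hug hgq
    _ = δ := ENNReal.add_halves δ

theorem integral_norm_sq_lt_of_eLpNorm_two_lt {α E : Type*} [MeasurableSpace α] {μ : Measure α}
    [NormedAddCommGroup E] {g : α → E} (hg : AEStronglyMeasurable g μ) {ε : ℝ}
    (h : eLpNorm g 2 μ < ENNReal.ofReal √ε) : ∫ x, ‖g x‖ ^ 2 ∂μ < ε := by
  have h' := ENNReal.toReal_lt_of_lt_ofReal h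
  rw [toReal_eLpNorm hg, lpNorm_eq_integral_norm_rpow_toReal two_ne_zero ENNReal.ofNat_ne_top hg]
    at h'
  simp only [ENNReal.toReal_ofNat, Real.rpow_two] at h'
  rwa [← one_div, ← Real.sqrt_eq_rpow, Real.sqrt_lt_sqrt_iff (by positivity)] at h'

/-- The set of polynomials vanishing at `1` and `-1` is dense in the weighted Hilbert
space `L²((-1,1); (1-x²)⁻¹ dx)`; equivalently, the Jacobi polynomials
`{P_n^{(-1,-1)}}_{n ≥ 2}` form a complete orthogonal set there. -/
theorem jacobi_m1_m1_polynomials_dense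
    (f : ℝ → ℂ)
    (hf_meas : AEStronglyMeasurable f (volume.restrict (Ioo (-1 : ℝ) 1)))
    (hf_L2 : IntegrableOn (fun x => ‖f x‖ ^ 2 * (1 - x ^ 2)⁻¹) (Ioo (-1 : ℝ) 1))
    (ε : ℝ) (hε : 0 < ε) :
    ∃ p : Polynomial ℂ, p.eval 1 = 0 ∧ p.eval (-1) = 0 ∧
      ∫ x in Ioo (-1 : ℝ) 1, ‖f x - p.eval (x : ℂ)‖ ^ 2 * (1 - x ^ 2)⁻¹ < ε := by
  have hw : Measurable fun x : ℝ => 1 - x ^ 2 := by fun_prop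
  have hw₀ : ∀ x ∈ Ioo (-1 : ℝ) 1, 0 < 1 - x ^ 2 := fun x hx => by nlinarith [hx.1, hx.2]
  set ν := (volume.restrict (Ioo (-1 : ℝ) 1)).withDensity fun x => .ofReal (1 - x ^ 2)
  have hν_ac : ν ≪ volume.restrict (Ioo (-1 : ℝ) 1) := withDensity_absolutelyContinuous _ _
  have : IsFiniteMeasure ν := isFiniteMeasure_withDensity_ofReal
    ((by fun_prop : Continuous fun x : ℝ => 1 - x ^ 2).integrableOn_Icc.mono_set
      Ioo_subset_Icc_self).2
  have hν_supp : ∀ᵐ x ∂ν, x ∈ Icc (-1 : ℝ) 1 := by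
    filter_upwards [hν_ac.ae_le (ae_restrict_mem measurableSet_Ioo)] with x hx
    exact Ioo_subset_Icc_self hx
  have hu_meas : AEStronglyMeasurable (fun x => (1 - x ^ 2)⁻¹ • f x) ν :=
    (by fun_prop : Measurable fun x : ℝ => (1 - x ^ 2)⁻¹).aestronglyMeasurable.smul
      (hf_meas.mono_ac hν_ac)
  have hu : MemLp (fun x => (1 - x ^ 2)⁻¹ • f x) 2 ν := by
    rw [memLp_two_iff_integrable_sq_norm hu_meas,
      integrable_restrict_withDensity_ofReal_iff hw measurableSet_Ioo fun x hx => (hw₀ x hx).le]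
    refine hf_L2.congr_fun (fun x hx => ?_) measurableSet_Ioo
    simpa using (mul_norm_inv_smul_sub_sq (hw₀ x hx) (f x) 0).symm
  obtain ⟨q, hq⟩ := hu.exists_polynomial_eLpNorm_sub_lt hν_supp one_le_two ENNReal.ofNat_ne_top
    (δ := .ofReal √ε) (by simpa using hε)
  refine ⟨(1 - X ^ 2) * q, by simp, by simp, ?_⟩
  calc _ = ∫ x, ‖(1 - x ^ 2)⁻¹ • f x - q.eval (x : ℂ)‖ ^ 2 ∂ν := by
        rw [integral_restrict_withDensity_ofReal hw measurableSet_Ioo fun x hx => (hw₀ x hx).le]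
        refine setIntegral_congr_fun measurableSet_Ioo fun x hx => ?_
        rw [smul_eq_mul, mul_norm_inv_smul_sub_sq (hw₀ x hx)]
        simp [Complex.real_smul]
    _ < ε := integral_norm_sq_lt_of_eLpNorm_two_lt (hu_meas.sub (by fun_prop)) hq
end

section
/- Let -∞ ≤ a < b ≤ ∞, let w be a positive Lebesgue measurable function on (a,b), and let φ, ψ be measurable functions with: (i) φ, ψ ∈ L²_loc((a,b); w); (ii) for some c ∈ (a,b), φ ∈ L²((a,c]; w) and ψ ∈ L²([c,b); w); (iii) for all a < α and β < b, ∫_a^α |φ|²w > 0 and ∫_β^b |ψ|²w > 0. Define (Ag)(x) := φ(x)∫_x^b ψ(t)g(t)w(t)dt and (Bg)(x) := ψ(x)∫_a^x φ(t)g(t)w(t)dt for g ∈ L²((a,b); w), and set K := sup_{x∈(a,b)} (∫_a^x |φ|²w)^{1/2}·(∫_x^b |ψ|²w)^{1/2}. Then A and B are bounded linear operators on L²((a,b); w) if and only if K < ∞, and in that case ‖Af‖ ≤ 2K‖f‖ and ‖Bg‖ ≤ 2K‖g‖ for all f, g ∈ L²((a,b); w). -/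
/-!
Write `F x = ∫_{(a,x)} φ² w` and `G x = ∫_{(x,b)} ψ² w`, so that `√(F x) √(G x) ≤ K`.
The key one-dimensional fact is `∫_{(-∞,x)} dF / √F ≤ 2 √(F x)` for the distribution function
`F` of any atomless measure, proved by the layer-cake formula since `{F < s}` has mass `≤ s`.
For `B`, Cauchy–Schwarz with the weight `√F` and this fact give
`|∫_a^x φ g w|² ≤ 2 √(F x) ∫_a^x |g|² w √F`. Integrating against `ψ² w`, exchanging the order
of integration and using `√F ≤ K / √G`, `∫_t^b ψ² w / √G ≤ 2 √(G t)` and `√G ≤ K / √F`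
yields `‖B g‖² ≤ 4 K² ‖g‖²`; `A` is the mirror image of `B` under `t ↦ -t`.
Conversely, on `(x, b)` the operator `B` maps `φ 1_{(a,x)}` to `F x · ψ`, so a bound `C` for `B`
forces `F x √(G x) ≤ C √(F x)`, i.e. `√(F x) √(G x) ≤ C`.
-/

open MeasureTheory Set ENNReal NNReal

/-- The weighted `L²` norm `(∫_S |u|² w)^{1/2}` (valued in `ℝ≥0∞`). -/
noncomputable def wL2norm (S : Set ℝ) (w : ℝ → ℝ) (u : ℝ → ℂ) : ℝ≥0∞ :=
  (∫⁻ t in S, (‖u t‖₊ : ℝ≥0∞) ^ 2 * ENNReal.ofReal (w t)) ^ (1 / 2 : ℝ)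

namespace ENNReal

theorem sq_rpow_one_half (x : ℝ≥0∞) : (x ^ 2) ^ (1 / 2 : ℝ) = x := by
  simpa [one_div] using pow_rpow_inv_natCast two_ne_zero x

theorem rpow_one_half_sq (x : ℝ≥0∞) : (x ^ (1 / 2 : ℝ)) ^ 2 = x := by
  simpa [one_div] using rpow_inv_natCast_pow two_ne_zero x

theorem rpow_one_half_mul_rpow_neg_one_half {x : ℝ≥0∞} (h0 : x ≠ 0) (htop : x ≠ ⊤) :
    x ^ (1 / 2 : ℝ) * x ^ (-(1 / 2) : ℝ) = 1 := by
  rw [← rpow_add _ _ h0 htop, add_neg_cancel, rpow_zero]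

theorem rpow_one_half_le_mul_rpow_neg_one_half {a b K : ℝ≥0∞} (hb0 : b ≠ 0) (hbtop : b ≠ ⊤)
    (h : a ^ (1 / 2 : ℝ) * b ^ (1 / 2 : ℝ) ≤ K) : a ^ (1 / 2 : ℝ) ≤ K * b ^ (-(1 / 2) : ℝ) :=
  calc a ^ (1 / 2 : ℝ) = a ^ (1 / 2 : ℝ) * b ^ (1 / 2 : ℝ) * b ^ (-(1 / 2) : ℝ) := by
        rw [mul_assoc, rpow_one_half_mul_rpow_neg_one_half hb0 hbtop, mul_one]
    _ ≤ K * b ^ (-(1 / 2) : ℝ) := by gcongr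

end ENNReal

theorem measure_setOf_measure_Iio_lt_le (ν : Measure ℝ) [NullSingletonClass ν] (s : ℝ≥0∞) :
    ν {t | ν (Iio t) < s} ≤ s := by
  set E := {t | ν (Iio t) < s}
  have hE : ∀ ⦃t u⦄, u ≤ t → t ∈ E → u ∈ E := fun _ _ h ht =>
    (measure_mono (Iio_subset_Iio h)).trans_lt ht
  set D := ⋃ q : {q : ℚ // (q : ℝ) ∈ E}, Iio (q : ℝ)
  -- `E` is a lower set, so it exceeds `D` by at most its largest element
  have hED : (E \ D).Subsingleton := by
    intro t ht u hu
    by_contra hne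
    wlog htu : t < u generalizing t u
    · exact this hu ht (Ne.symm hne) ((Ne.symm hne).lt_of_le (not_lt.1 htu))
    obtain ⟨q, htq, hqu⟩ := exists_rat_btwn htu
    exact ht.2 (mem_iUnion.2 ⟨⟨q, hE hqu.le hu.1⟩, htq⟩)
  have hmono : Monotone fun q : {q : ℚ // (q : ℝ) ∈ E} => Iio (q : ℝ) := fun q r h =>
    Iio_subset_Iio (by exact_mod_cast h)
  calc ν E ≤ ν D := measure_mono_ae (ae_le_set.2 (hED.measure_zero ν))
    _ ≤ s := by
      rw [hmono.measure_iUnion]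
      exact iSup_le fun q => q.2.le

theorem lintegral_Ioi_min_rpow_neg_two_le (m : ℝ≥0∞) :
    ∫⁻ s in Ioi (0 : ℝ), min m (ENNReal.ofReal (s ^ (-2 : ℝ))) ≤ 2 * m ^ (1 / 2 : ℝ) := by
  obtain rfl | hm0 := eq_or_ne m 0
  · simp
  obtain rfl | hmtop := eq_or_ne m ⊤
  · simp
  obtain ⟨M, hM, rfl⟩ : ∃ M : ℝ, 0 < M ∧ ENNReal.ofReal M = m :=
    ⟨m.toReal, ENNReal.toReal_pos hm0 hmtop, ENNReal.ofReal_toReal hmtop⟩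
  set u := M ^ (-(1 / 2) : ℝ)
  have hu : 0 < u := Real.rpow_pos_of_pos hM _
  have hroot : ENNReal.ofReal M ^ (1 / 2 : ℝ) = ENNReal.ofReal (M ^ (1 / 2 : ℝ)) :=
    ENNReal.ofReal_rpow_of_nonneg hM.le (by norm_num)
  have hhead : ∫⁻ s in Ioc 0 u, min (ENNReal.ofReal M) (ENNReal.ofReal (s ^ (-2 : ℝ)))
      ≤ ENNReal.ofReal M ^ (1 / 2 : ℝ) :=
    calc ∫⁻ s in Ioc 0 u, min (ENNReal.ofReal M) (ENNReal.ofReal (s ^ (-2 : ℝ)))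
        ≤ ∫⁻ _ in Ioc 0 u, ENNReal.ofReal M := lintegral_mono fun _ => min_le_left _ _
      _ = ENNReal.ofReal M ^ (1 / 2 : ℝ) := by
        rw [setLIntegral_const, Real.volume_Ioc, sub_zero, ← ENNReal.ofReal_mul hM.le,
          ← Real.rpow_one_add' hM.le (by norm_num), hroot]
        norm_num
  have htail : ∫⁻ s in Ioi u, min (ENNReal.ofReal M) (ENNReal.ofReal (s ^ (-2 : ℝ)))
      ≤ ENNReal.ofReal M ^ (1 / 2 : ℝ) :=
    calc ∫⁻ s in Ioi u, min (ENNReal.ofReal M) (ENNReal.ofReal (s ^ (-2 : ℝ)))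
        ≤ ∫⁻ s in Ioi u, ENNReal.ofReal (s ^ (-2 : ℝ)) := lintegral_mono fun _ => min_le_right _ _
      _ = ENNReal.ofReal (∫ s in Ioi u, s ^ (-2 : ℝ)) := by
        rw [ofReal_integral_eq_lintegral_ofReal (integrableOn_Ioi_rpow_of_lt (by norm_num) hu)]
        filter_upwards [ae_restrict_mem measurableSet_Ioi] with s hs
        exact Real.rpow_nonneg (hu.trans hs).le _
      _ = ENNReal.ofReal M ^ (1 / 2 : ℝ) := by
        rw [integral_Ioi_rpow_of_lt (by norm_num) hu, ← Real.rpow_mul hM.le, hroot]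
        norm_num
  rw [← Ioc_union_Ioi_eq_Ioi hu.le, two_mul]
  exact (lintegral_union_le _ _ _).trans (add_le_add hhead htail)

theorem ae_measure_Iio_ne_zero (ν : Measure ℝ) [NullSingletonClass ν] :
    ∀ᵐ t ∂ν, ν (Iio t) ≠ 0 := by
  refine measure_eq_zero_iff_ae_notMem.1 ?_
  refine nonpos_iff_eq_zero.1 (ENNReal.le_of_forall_pos_le_add fun ε hε _ => ?_)
  refine (measure_mono fun t (ht : ν (Iio t) = 0) => ?_).trans
    ((measure_setOf_measure_Iio_lt_le ν ε).trans (zero_add _).ge)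
  show ν (Iio t) < ε
  rw [ht]; exact_mod_cast hε

theorem lintegral_measure_Iio_rpow_neg_half_le (ν : Measure ℝ) [NullSingletonClass ν] :
    ∫⁻ t, ν (Iio t) ^ (-(1 / 2) : ℝ) ∂ν ≤ 2 * ν univ ^ (1 / 2 : ℝ) := by
  obtain hM | hM := eq_or_ne (ν univ) ⊤
  · simp [hM]
  have hfin : ∀ t, ν (Iio t) ≠ ⊤ := fun t => measure_ne_top_of_subset (subset_univ _) hM
  set g : ℝ → ℝ := fun t => (ν (Iio t)).toReal ^ (-(1 / 2) : ℝ) with hg_def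
  have hg : Measurable g := (Monotone.measurable fun _ _ h =>
    measure_mono (μ := ν) (Iio_subset_Iio h)).ennreal_toReal.pow_const _
  have hlevel : ∀ s ∈ Ioi (0 : ℝ),
      ν {t | s < g t} ≤ min (ν univ) (ENNReal.ofReal (s ^ (-2 : ℝ))) := by
    intro s (hs : 0 < s)
    refine le_min (measure_mono (subset_univ _))
      ((measure_mono fun t (ht : s < g t) => ?_).trans (measure_setOf_measure_Iio_lt_le ν _))
    simp only [hg_def] at ht
    have hpos : 0 < (ν (Iio t)).toReal := by
      by_contra h0
      rw [le_antisymm (not_lt.1 h0) ENNReal.toReal_nonneg, Real.zero_rpow (by norm_num)] at ht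
      exact hs.not_gt ht
    rw [show (-(1 / 2) : ℝ) = (-2)⁻¹ by norm_num,
      Real.lt_rpow_inv_iff_of_neg hs hpos (by norm_num)] at ht
    show ν (Iio t) < _
    rwa [← ENNReal.ofReal_toReal (hfin t), ENNReal.ofReal_lt_ofReal_iff (by positivity)]
  calc ∫⁻ t, ν (Iio t) ^ (-(1 / 2) : ℝ) ∂ν = ∫⁻ t, ENNReal.ofReal (g t) ∂ν := by
        refine lintegral_congr_ae ((ae_measure_Iio_ne_zero ν).mono fun t ht => ?_)
        simp only [hg_def]
        rw [← ENNReal.ofReal_rpow_of_pos (ENNReal.toReal_pos ht (hfin t)),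
          ENNReal.ofReal_toReal (hfin t)]
    _ = ∫⁻ s in Ioi 0, ν {t | s < g t} :=
        lintegral_eq_lintegral_meas_lt ν (ae_of_all _ fun t => by positivity) hg.aemeasurable
    _ ≤ ∫⁻ s in Ioi 0, min (ν univ) (ENNReal.ofReal (s ^ (-2 : ℝ))) :=
        setLIntegral_mono' measurableSet_Ioi hlevel
    _ ≤ 2 * ν univ ^ (1 / 2 : ℝ) := lintegral_Ioi_min_rpow_neg_two_le _

theorem setLIntegral_Iio_measure_Iio_rpow_neg_half_le (ν : Measure ℝ) [NullSingletonClass ν]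
    (x : ℝ) : ∫⁻ t in Iio x, ν (Iio t) ^ (-(1 / 2) : ℝ) ∂ν ≤ 2 * ν (Iio x) ^ (1 / 2 : ℝ) := by
  have h := lintegral_measure_Iio_rpow_neg_half_le (ν.restrict (Iio x))
  rw [Measure.restrict_apply_univ] at h
  refine le_of_eq_of_le (setLIntegral_congr_fun measurableSet_Iio fun t ht => ?_) h
  rw [Measure.restrict_apply measurableSet_Iio, inter_eq_left.2 (Iio_subset_Iio (le_of_lt ht))]

instance (ν : Measure ℝ) [NullSingletonClass ν] : NullSingletonClass (ν.map Neg.neg) :=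
  ⟨fun x => by rw [measurableEmbedding_neg.map_apply]; simp⟩

theorem map_neg_apply_Iio (ν : Measure ℝ) (x : ℝ) : ν.map Neg.neg (Iio x) = ν (Ioi (-x)) := by
  rw [measurableEmbedding_neg.map_apply]; simp

theorem setLIntegral_map_neg (μ : Measure ℝ) (s : Set ℝ) (h : ℝ → ℝ≥0∞) :
    ∫⁻ y in s, h y ∂μ.map Neg.neg = ∫⁻ x in -s, h (-x) ∂μ := by
  rw [measurableEmbedding_neg.restrict_map, measurableEmbedding_neg.lintegral_map]
  rfl

theorem setLIntegral_Ioi_measure_Ioi_rpow_neg_half_le (ν : Measure ℝ) [NullSingletonClass ν]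
    (x : ℝ) : ∫⁻ t in Ioi x, ν (Ioi t) ^ (-(1 / 2) : ℝ) ∂ν ≤ 2 * ν (Ioi x) ^ (1 / 2 : ℝ) := by
  have h := setLIntegral_Iio_measure_Iio_rpow_neg_half_le (ν.map Neg.neg) (-x)
  simpa [setLIntegral_map_neg, map_neg_apply_Iio] using h

theorem sq_lintegral_rpow_half_mul_le {α : Type*} [MeasurableSpace α] (ν : Measure α)
    {f q h : α → ℝ≥0∞} (hf : AEMeasurable f ν) (hq : AEMeasurable q ν) (hh : AEMeasurable h ν)
    (h_ne : ∀ᵐ t ∂ν, h t ≠ 0 ∧ h t ≠ ⊤) :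
    (∫⁻ t, (f t * q t) ^ (1 / 2 : ℝ) ∂ν) ^ 2
      ≤ (∫⁻ t, f t * (h t)⁻¹ ∂ν) * ∫⁻ t, q t * h t ∂ν := by
  have hsplit : ∀ᵐ t ∂ν, (f t * q t) ^ (1 / 2 : ℝ)
      = (f t * (h t)⁻¹) ^ (1 / 2 : ℝ) * (q t * h t) ^ (1 / 2 : ℝ) := h_ne.mono fun t ht => by
    rw [← ENNReal.mul_rpow_of_nonneg _ _ (by norm_num), mul_mul_mul_comm,
      ENNReal.inv_mul_cancel ht.1 ht.2, mul_one]
  have holder := ENNReal.lintegral_mul_le_Lp_mul_Lq ν Real.HolderConjugate.two_two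
    ((hf.mul hh.inv).pow_const (1 / 2 : ℝ)) ((hq.mul hh).pow_const (1 / 2 : ℝ))
  simp only [Pi.mul_apply, ENNReal.rpow_two, ENNReal.rpow_one_half_sq] at holder
  calc (∫⁻ t, (f t * q t) ^ (1 / 2 : ℝ) ∂ν) ^ 2
      = (∫⁻ t, (f t * (h t)⁻¹) ^ (1 / 2 : ℝ) * (q t * h t) ^ (1 / 2 : ℝ) ∂ν) ^ 2 := by
        rw [lintegral_congr_ae hsplit]
    _ ≤ ((∫⁻ t, f t * (h t)⁻¹ ∂ν) ^ (1 / 2 : ℝ) * (∫⁻ t, q t * h t ∂ν) ^ (1 / 2 : ℝ)) ^ 2 :=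
        pow_le_pow_left₀ zero_le holder 2
    _ = (∫⁻ t, f t * (h t)⁻¹ ∂ν) * ∫⁻ t, q t * h t ∂ν := by
        rw [mul_pow, ENNReal.rpow_one_half_sq, ENNReal.rpow_one_half_sq]

section Hardy

variable (μ : Measure ℝ) {f p q : ℝ → ℝ≥0∞}

theorem setLIntegral_Iio_mul_rpow_neg_half_le [NullSingletonClass μ] (hf : Measurable f)
    (x : ℝ) : ∫⁻ t in Iio x, f t * (∫⁻ u in Iio t, f u ∂μ) ^ (-(1 / 2) : ℝ) ∂μ
      ≤ 2 * (∫⁻ u in Iio x, f u ∂μ) ^ (1 / 2 : ℝ) := by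
  have hν (t : ℝ) : μ.withDensity f (Iio t) = ∫⁻ u in Iio t, f u ∂μ :=
    withDensity_apply f measurableSet_Iio
  have h := setLIntegral_Iio_measure_Iio_rpow_neg_half_le (μ.withDensity f) x
  simp only [hν] at h
  rwa [setLIntegral_withDensity_eq_setLIntegral_mul μ hf _ measurableSet_Iio] at h
  exact (Monotone.measurable fun _ _ h => lintegral_mono_set (Iio_subset_Iio h)).pow_const _

theorem setLIntegral_Ioi_mul_rpow_neg_half_le [NullSingletonClass μ] (hf : Measurable f)
    (x : ℝ) : ∫⁻ t in Ioi x, f t * (∫⁻ u in Ioi t, f u ∂μ) ^ (-(1 / 2) : ℝ) ∂μ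
      ≤ 2 * (∫⁻ u in Ioi x, f u ∂μ) ^ (1 / 2 : ℝ) := by
  have hν (t : ℝ) : μ.withDensity f (Ioi t) = ∫⁻ u in Ioi t, f u ∂μ :=
    withDensity_apply f measurableSet_Ioi
  have h := setLIntegral_Ioi_measure_Ioi_rpow_neg_half_le (μ.withDensity f) x
  simp only [hν] at h
  rwa [setLIntegral_withDensity_eq_setLIntegral_mul μ hf _ measurableSet_Ioi] at h
  exact (Antitone.measurable fun _ _ h => lintegral_mono_set (Ioi_subset_Ioi h)).pow_const _

theorem lintegral_mul_setLIntegral_Iio_comm [SFinite μ] {u v : ℝ → ℝ≥0∞} (hu : Measurable u)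
    (hv : Measurable v) :
    ∫⁻ x, u x * ∫⁻ t in Iio x, v t ∂μ ∂μ = ∫⁻ t, v t * ∫⁻ x in Ioi t, u x ∂μ ∂μ := by
  have hmeas : Measurable fun z : ℝ × ℝ => (Ioi z.2).indicator (fun x => v z.2 * u x) z.1 :=
    ((hv.comp measurable_snd).mul (hu.comp measurable_fst)).indicator
      (measurableSet_lt measurable_snd measurable_fst)
  calc ∫⁻ x, u x * ∫⁻ t in Iio x, v t ∂μ ∂μ
      = ∫⁻ x, ∫⁻ t, (Ioi t).indicator (fun x => v t * u x) x ∂μ ∂μ := by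
        refine lintegral_congr fun x => ?_
        rw [← lintegral_const_mul _ hv, ← lintegral_indicator measurableSet_Iio]
        congr 1 with t
        simp only [indicator_apply, mem_Iio, mem_Ioi, mul_comm]
    _ = ∫⁻ t, ∫⁻ x, (Ioi t).indicator (fun x => v t * u x) x ∂μ ∂μ :=
        lintegral_lintegral_swap hmeas.aemeasurable
    _ = ∫⁻ t, v t * ∫⁻ x in Ioi t, u x ∂μ ∂μ := by
        simp_rw [lintegral_indicator measurableSet_Ioi, lintegral_const_mul _ hu]

theorem sq_setLIntegral_Iio_rpow_half_mul_le [NullSingletonClass μ] (hf : Measurable f)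
    (hq : Measurable q) (hF : ∀ᵐ x ∂μ, ∫⁻ t in Iio x, f t ∂μ ≠ 0 ∧ ∫⁻ t in Iio x, f t ∂μ ≠ ⊤)
    (x : ℝ) : (∫⁻ t in Iio x, (f t * q t) ^ (1 / 2 : ℝ) ∂μ) ^ 2
      ≤ 2 * (∫⁻ u in Iio x, f u ∂μ) ^ (1 / 2 : ℝ)
          * ∫⁻ t in Iio x, q t * (∫⁻ u in Iio t, f u ∂μ) ^ (1 / 2 : ℝ) ∂μ := by
  have hFm : Measurable fun t => (∫⁻ u in Iio t, f u ∂μ) ^ (1 / 2 : ℝ) :=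
    (Monotone.measurable fun _ _ h => lintegral_mono_set (Iio_subset_Iio h)).pow_const _
  have hw : ∀ᵐ t ∂μ.restrict (Iio x), (∫⁻ u in Iio t, f u ∂μ) ^ (1 / 2 : ℝ) ≠ 0 ∧
      (∫⁻ u in Iio t, f u ∂μ) ^ (1 / 2 : ℝ) ≠ ⊤ :=
    ae_restrict_of_ae (hF.mono fun t ht =>
      ⟨(ENNReal.rpow_pos (pos_iff_ne_zero.2 ht.1) ht.2).ne',
        ENNReal.rpow_ne_top_of_nonneg (by norm_num) ht.2⟩)
  refine (sq_lintegral_rpow_half_mul_le _ hf.aemeasurable hq.aemeasurable hFm.aemeasurable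
    hw).trans ?_
  simp only [← ENNReal.rpow_neg]
  gcongr
  exact setLIntegral_Iio_mul_rpow_neg_half_le μ hf x

theorem ae_setLIntegral_Ioi_mul_rpow_half_le [NullSingletonClass μ] (hp : Measurable p)
    {K : ℝ≥0∞}
    (hF : ∀ᵐ x ∂μ, ∫⁻ t in Iio x, f t ∂μ ≠ 0 ∧ ∫⁻ t in Iio x, f t ∂μ ≠ ⊤)
    (hG : ∀ᵐ x ∂μ, ∫⁻ t in Ioi x, p t ∂μ ≠ 0 ∧ ∫⁻ t in Ioi x, p t ∂μ ≠ ⊤)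
    (hK : ∀ᵐ x ∂μ,
      (∫⁻ t in Iio x, f t ∂μ) ^ (1 / 2 : ℝ) * (∫⁻ t in Ioi x, p t ∂μ) ^ (1 / 2 : ℝ) ≤ K) :
    ∀ᵐ t ∂μ, ∫⁻ x in Ioi t, p x * (∫⁻ u in Iio x, f u ∂μ) ^ (1 / 2 : ℝ) ∂μ
      ≤ 2 * K ^ 2 * (∫⁻ u in Iio t, f u ∂μ) ^ (-(1 / 2) : ℝ) := by
  have hGm : Measurable fun x => (∫⁻ u in Ioi x, p u ∂μ) ^ (-(1 / 2) : ℝ) :=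
    (Antitone.measurable fun _ _ h => lintegral_mono_set (Ioi_subset_Ioi h)).pow_const _
  have hFG : ∀ᵐ x ∂μ, (∫⁻ u in Iio x, f u ∂μ) ^ (1 / 2 : ℝ)
      ≤ K * (∫⁻ u in Ioi x, p u ∂μ) ^ (-(1 / 2) : ℝ) := by
    filter_upwards [hG, hK] with x hGx hKx
    exact ENNReal.rpow_one_half_le_mul_rpow_neg_one_half hGx.1 hGx.2 hKx
  filter_upwards [hF, hK] with t hFt hKt
  have hGF : (∫⁻ u in Ioi t, p u ∂μ) ^ (1 / 2 : ℝ)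
      ≤ K * (∫⁻ u in Iio t, f u ∂μ) ^ (-(1 / 2) : ℝ) :=
    ENNReal.rpow_one_half_le_mul_rpow_neg_one_half hFt.1 hFt.2 (by rwa [mul_comm] at hKt)
  calc ∫⁻ x in Ioi t, p x * (∫⁻ u in Iio x, f u ∂μ) ^ (1 / 2 : ℝ) ∂μ
      ≤ ∫⁻ x in Ioi t, K * (p x * (∫⁻ u in Ioi x, p u ∂μ) ^ (-(1 / 2) : ℝ)) ∂μ :=
        lintegral_mono_ae (ae_restrict_of_ae (hFG.mono fun x hx => by
          rw [mul_left_comm]; gcongr))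
    _ = K * ∫⁻ x in Ioi t, p x * (∫⁻ u in Ioi x, p u ∂μ) ^ (-(1 / 2) : ℝ) ∂μ :=
        lintegral_const_mul _ (hp.mul hGm)
    _ ≤ K * (2 * (K * (∫⁻ u in Iio t, f u ∂μ) ^ (-(1 / 2) : ℝ))) := by
        grw [setLIntegral_Ioi_mul_rpow_neg_half_le μ hp t, hGF]
    _ = 2 * K ^ 2 * (∫⁻ u in Iio t, f u ∂μ) ^ (-(1 / 2) : ℝ) := by ring

theorem lintegral_mul_sq_setLIntegral_Iio_le [SFinite μ] [NullSingletonClass μ]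
    (hf : Measurable f) (hp : Measurable p) (hq : AEMeasurable q μ) {K : ℝ≥0∞}
    (hF : ∀ᵐ x ∂μ, ∫⁻ t in Iio x, f t ∂μ ≠ 0 ∧ ∫⁻ t in Iio x, f t ∂μ ≠ ⊤)
    (hG : ∀ᵐ x ∂μ, ∫⁻ t in Ioi x, p t ∂μ ≠ 0 ∧ ∫⁻ t in Ioi x, p t ∂μ ≠ ⊤)
    (hK : ∀ᵐ x ∂μ,
      (∫⁻ t in Iio x, f t ∂μ) ^ (1 / 2 : ℝ) * (∫⁻ t in Ioi x, p t ∂μ) ^ (1 / 2 : ℝ) ≤ K) :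
    ∫⁻ x, p x * (∫⁻ t in Iio x, (f t * q t) ^ (1 / 2 : ℝ) ∂μ) ^ 2 ∂μ
      ≤ 4 * K ^ 2 * ∫⁻ t, q t ∂μ := by
  wlog hqm : Measurable q generalizing q
  · obtain ⟨q', hq'm, hqq'⟩ := hq
    have hinner (x : ℝ) : ∫⁻ t in Iio x, (f t * q t) ^ (1 / 2 : ℝ) ∂μ
        = ∫⁻ t in Iio x, (f t * q' t) ^ (1 / 2 : ℝ) ∂μ :=
      lintegral_congr_ae (ae_restrict_of_ae (hqq'.mono fun t ht => by simp only [ht]))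
    simpa only [hinner, lintegral_congr_ae hqq'] using this hq'm.aemeasurable hq'm
  set F : ℝ → ℝ≥0∞ := fun x => ∫⁻ t in Iio x, f t ∂μ
  have hFm : Measurable fun t => F t ^ (1 / 2 : ℝ) :=
    (Monotone.measurable fun _ _ h => lintegral_mono_set (Iio_subset_Iio h)).pow_const _
  calc ∫⁻ x, p x * (∫⁻ t in Iio x, (f t * q t) ^ (1 / 2 : ℝ) ∂μ) ^ 2 ∂μ
      ≤ ∫⁻ x, 2 * (p x * F x ^ (1 / 2 : ℝ) * ∫⁻ t in Iio x, q t * F t ^ (1 / 2 : ℝ) ∂μ) ∂μ :=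
        lintegral_mono fun x =>
          (mul_le_mul_right (sq_setLIntegral_Iio_rpow_half_mul_le μ hf hqm hF x) (p x)).trans_eq
            (by ring)
    _ = 2 * ∫⁻ t, q t * F t ^ (1 / 2 : ℝ) * ∫⁻ x in Ioi t, p x * F x ^ (1 / 2 : ℝ) ∂μ ∂μ := by
        rw [lintegral_const_mul' _ _ ofNat_ne_top,
          lintegral_mul_setLIntegral_Iio_comm μ (u := fun x => p x * F x ^ (1 / 2 : ℝ))
          (v := fun t => q t * F t ^ (1 / 2 : ℝ)) (hp.mul hFm) (hqm.mul hFm)]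
    _ ≤ 2 * ∫⁻ t, q t * F t ^ (1 / 2 : ℝ) * (2 * K ^ 2 * F t ^ (-(1 / 2) : ℝ)) ∂μ := by
        gcongr 1
        exact lintegral_mono_ae ((ae_setLIntegral_Ioi_mul_rpow_half_le μ hp hF hG hK).mono
          fun t ht => by gcongr)
    _ = 2 * ∫⁻ t, 2 * K ^ 2 * q t ∂μ := by
        congr 1
        refine lintegral_congr_ae (hF.mono fun t ht => ?_)
        dsimp only
        rw [mul_mul_mul_comm, ENNReal.rpow_one_half_mul_rpow_neg_one_half ht.1 ht.2, mul_one,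
          mul_comm]
    _ = 4 * K ^ 2 * ∫⁻ t, q t ∂μ := by
        rw [lintegral_const_mul _ hqm, ← mul_assoc, ← mul_assoc]; norm_num

theorem lintegral_mul_sq_setLIntegral_Ioi_le [SFinite μ] [NullSingletonClass μ]
    (hf : Measurable f) (hp : Measurable p) (hq : AEMeasurable q μ) {K : ℝ≥0∞}
    (hF : ∀ᵐ x ∂μ, ∫⁻ t in Iio x, f t ∂μ ≠ 0 ∧ ∫⁻ t in Iio x, f t ∂μ ≠ ⊤)
    (hG : ∀ᵐ x ∂μ, ∫⁻ t in Ioi x, p t ∂μ ≠ 0 ∧ ∫⁻ t in Ioi x, p t ∂μ ≠ ⊤)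
    (hK : ∀ᵐ x ∂μ,
      (∫⁻ t in Iio x, f t ∂μ) ^ (1 / 2 : ℝ) * (∫⁻ t in Ioi x, p t ∂μ) ^ (1 / 2 : ℝ) ≤ K) :
    ∫⁻ x, f x * (∫⁻ t in Ioi x, (p t * q t) ^ (1 / 2 : ℝ) ∂μ) ^ 2 ∂μ
      ≤ 4 * K ^ 2 * ∫⁻ t, q t ∂μ := by
  have h := lintegral_mul_sq_setLIntegral_Iio_le (μ.map Neg.neg) (K := K)
    (f := fun t => p (-t)) (p := fun t => f (-t)) (q := fun t => q (-t))
    (hp.comp measurable_neg) (hf.comp measurable_neg)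
    (measurableEmbedding_neg.aemeasurable_map_iff.2 (by simpa [Function.comp_def] using hq))
    (measurableEmbedding_neg.ae_map_iff.2 (by simpa [setLIntegral_map_neg] using hG))
    (measurableEmbedding_neg.ae_map_iff.2 (by simpa [setLIntegral_map_neg] using hF))
    (measurableEmbedding_neg.ae_map_iff.2 (by simpa [setLIntegral_map_neg, mul_comm] using hK))
  simpa [setLIntegral_map_neg, measurableEmbedding_neg.lintegral_map] using h

end Hardy

theorem ofReal_sq_mul (b w : ℝ) :
    ENNReal.ofReal (b ^ 2 * w) = (‖(b : ℂ)‖₊ : ℝ≥0∞) ^ 2 * ENNReal.ofReal w := by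
  rw [ENNReal.ofReal_mul (sq_nonneg b), Complex.nnnorm_real, ← sq_abs,
    ENNReal.ofReal_pow (abs_nonneg b), ← Real.enorm_eq_ofReal_abs, enorm_eq_nnnorm]

theorem nnnorm_ofReal_mul_mul_ofReal {w : ℝ} (hw : 0 ≤ w) (b : ℝ) (z : ℂ) :
    (‖(b : ℂ) * z * (w : ℂ)‖₊ : ℝ≥0∞)
      = (ENNReal.ofReal (b ^ 2 * w) * ((‖z‖₊ : ℝ≥0∞) ^ 2 * ENNReal.ofReal w)) ^ (1 / 2 : ℝ) := by
  rw [ofReal_sq_mul, ← ENNReal.sq_rpow_one_half (‖_‖₊ : ℝ≥0∞), nnnorm_mul, nnnorm_mul,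
    Complex.nnnorm_real w, ENNReal.coe_mul, ENNReal.coe_mul, ← enorm_eq_nnnorm w,
    Real.enorm_eq_ofReal hw]
  ring_nf

theorem nnnorm_mul_setIntegral_sq_mul_ofReal_le {T : Set ℝ} (hT : MeasurableSet T)
    {b w : ℝ → ℝ} (hw : ∀ t ∈ T, 0 ≤ w t) (g : ℝ → ℂ) (a v : ℝ) :
    (‖(a : ℂ) * ∫ t in T, (b t : ℂ) * g t * (w t : ℂ)‖₊ : ℝ≥0∞) ^ 2 * ENNReal.ofReal v
      ≤ ENNReal.ofReal (a ^ 2 * v) * (∫⁻ t in T, (ENNReal.ofReal (b t ^ 2 * w t)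
          * ((‖g t‖₊ : ℝ≥0∞) ^ 2 * ENNReal.ofReal (w t))) ^ (1 / 2 : ℝ)) ^ 2 := by
  rw [nnnorm_mul, ENNReal.coe_mul, mul_pow, mul_right_comm, ← ofReal_sq_mul, ← enorm_eq_nnnorm]
  gcongr
  refine (enorm_integral_le_lintegral_enorm _).trans_eq (setLIntegral_congr_fun hT fun t ht => ?_)
  rw [enorm_eq_nnnorm, nnnorm_ofReal_mul_mul_ofReal (hw t ht)]

theorem wL2norm_le_mul_of_lintegral_le {S : Set ℝ} {w : ℝ → ℝ} {u g : ℝ → ℂ} {C : ℝ≥0∞}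
    (h : ∫⁻ t in S, (‖u t‖₊ : ℝ≥0∞) ^ 2 * ENNReal.ofReal (w t)
      ≤ C ^ 2 * ∫⁻ t in S, (‖g t‖₊ : ℝ≥0∞) ^ 2 * ENNReal.ofReal (w t)) :
    wL2norm S w u ≤ C * wL2norm S w g := by
  unfold wL2norm
  calc _ ≤ (C ^ 2 * ∫⁻ t in S, (‖g t‖₊ : ℝ≥0∞) ^ 2 * ENNReal.ofReal (w t)) ^ (1 / 2 : ℝ) :=
        ENNReal.rpow_le_rpow h (by norm_num)
    _ = _ := by rw [ENNReal.mul_rpow_of_nonneg _ _ (by norm_num), ENNReal.sq_rpow_one_half]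

theorem lintegral_ofReal_ne_zero_and_ne_top {α : Type*} [MeasurableSpace α] {μ : Measure α}
    {h : α → ℝ} (hint : Integrable h μ) (hpos : 0 < ∫ t, h t ∂μ) :
    ∫⁻ t, ENNReal.ofReal (h t) ∂μ ≠ 0 ∧ ∫⁻ t, ENNReal.ofReal (h t) ∂μ ≠ ⊤ := by
  refine ⟨fun h0 => ?_, ((lintegral_ofReal_le_lintegral_enorm h).trans_lt hint.2).ne⟩
  rw [integral_eq_lintegral_pos_part_sub_lintegral_neg_part hint, h0, toReal_zero,
    zero_sub] at hpos
  exact hpos.not_ge (neg_nonpos.2 toReal_nonneg)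

theorem MeasureTheory.IntegrableOn.inter_Iio_of_Icc {S : Set ℝ} {h : ℝ → ℝ} {c x : ℝ}
    (hleft : IntegrableOn h (S ∩ Iic c)) (hmid : IntegrableOn h (Icc c x)) :
    IntegrableOn h (S ∩ Iio x) :=
  (hleft.union hmid).mono_set fun t ⟨htS, htx⟩ =>
    (le_total t c).imp (fun htc => ⟨htS, htc⟩) fun hct => ⟨hct, le_of_lt htx⟩

theorem MeasureTheory.IntegrableOn.inter_Ioi_of_Icc {S : Set ℝ} {h : ℝ → ℝ} {c x : ℝ}
    (hright : IntegrableOn h (S ∩ Ici c)) (hmid : IntegrableOn h (Icc x c)) :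
    IntegrableOn h (S ∩ Ioi x) :=
  (hright.union hmid).mono_set fun t ⟨htS, hxt⟩ =>
    (le_total c t).imp (fun hct => ⟨htS, hct⟩) fun htc => ⟨le_of_lt hxt, htc⟩

section WeightedOperators

variable {S : Set ℝ} {w φ ψ : ℝ → ℝ}

theorem wL2norm_integral_operators_le (hS : MeasurableSet S) (hw : Measurable w)
    (hw0 : ∀ t ∈ S, 0 ≤ w t) (hφ : Measurable φ) (hψ : Measurable ψ) {K : ℝ≥0∞}
    (hF : ∀ x ∈ S, ∫⁻ t in S ∩ Iio x, ENNReal.ofReal (φ t ^ 2 * w t) ≠ 0 ∧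
      ∫⁻ t in S ∩ Iio x, ENNReal.ofReal (φ t ^ 2 * w t) ≠ ⊤)
    (hG : ∀ x ∈ S, ∫⁻ t in S ∩ Ioi x, ENNReal.ofReal (ψ t ^ 2 * w t) ≠ 0 ∧
      ∫⁻ t in S ∩ Ioi x, ENNReal.ofReal (ψ t ^ 2 * w t) ≠ ⊤)
    (hK : ∀ x ∈ S, (∫⁻ t in S ∩ Iio x, ENNReal.ofReal (φ t ^ 2 * w t)) ^ (1 / 2 : ℝ) *
      (∫⁻ t in S ∩ Ioi x, ENNReal.ofReal (ψ t ^ 2 * w t)) ^ (1 / 2 : ℝ) ≤ K)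
    {g : ℝ → ℂ} (hg : AEStronglyMeasurable g (volume.restrict S)) :
    wL2norm S w (fun x => (φ x : ℂ) * ∫ t in S ∩ Ioi x, (ψ t : ℂ) * g t * (w t : ℂ))
        ≤ 2 * K * wL2norm S w g ∧
      wL2norm S w (fun x => (ψ x : ℂ) * ∫ t in S ∩ Iio x, (φ t : ℂ) * g t * (w t : ℂ))
        ≤ 2 * K * wL2norm S w g := by
  have hIio (x : ℝ) : (volume.restrict S).restrict (Iio x) = volume.restrict (S ∩ Iio x) := by
    rw [Measure.restrict_restrict measurableSet_Iio, inter_comm]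
  have hIoi (x : ℝ) : (volume.restrict S).restrict (Ioi x) = volume.restrict (S ∩ Ioi x) := by
    rw [Measure.restrict_restrict measurableSet_Ioi, inter_comm]
  have hf : Measurable fun t => ENNReal.ofReal (φ t ^ 2 * w t) :=
    ((hφ.pow_const 2).mul hw).ennreal_ofReal
  have hp : Measurable fun t => ENNReal.ofReal (ψ t ^ 2 * w t) :=
    ((hψ.pow_const 2).mul hw).ennreal_ofReal
  have hq : AEMeasurable (fun t => (‖g t‖₊ : ℝ≥0∞) ^ 2 * ENNReal.ofReal (w t))
      (volume.restrict S) :=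
    (hg.enorm.pow_const 2).mul hw.ennreal_ofReal.aemeasurable
  have hsq : (4 : ℝ≥0∞) * K ^ 2 = (2 * K) ^ 2 := by ring
  have hF' := ae_restrict_of_forall_mem (μ := volume) hS hF
  have hG' := ae_restrict_of_forall_mem (μ := volume) hS hG
  have hK' := ae_restrict_of_forall_mem (μ := volume) hS hK
  simp only [← hIio, ← hIoi] at hF' hG' hK'
  constructor
  · refine wL2norm_le_mul_of_lintegral_le ((lintegral_mono fun x =>
      nnnorm_mul_setIntegral_sq_mul_ofReal_le (hS.inter measurableSet_Ioi)
        (fun t ht => hw0 t ht.1) g (φ x) (w x)).trans ?_)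
    simpa only [hIio, hIoi, hsq] using
      lintegral_mul_sq_setLIntegral_Ioi_le _ hf hp hq hF' hG' hK'
  · refine wL2norm_le_mul_of_lintegral_le ((lintegral_mono fun x =>
      nnnorm_mul_setIntegral_sq_mul_ofReal_le (hS.inter measurableSet_Iio)
        (fun t ht => hw0 t ht.1) g (ψ x) (w x)).trans ?_)
    simpa only [hIio, hIoi, hsq] using
      lintegral_mul_sq_setLIntegral_Iio_le _ hf hp hq hF' hG' hK'

theorem wL2norm_indicator_Iio (hS : MeasurableSet S) (x : ℝ) :
    wL2norm S w ((S ∩ Iio x).indicator fun t => (φ t : ℂ))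
      = (∫⁻ t in S ∩ Iio x, ENNReal.ofReal (φ t ^ 2 * w t)) ^ (1 / 2 : ℝ) := by
  have hSx := hS.inter (measurableSet_Iio (a := x))
  unfold wL2norm
  congr 1
  calc _ = ∫⁻ t in S, (S ∩ Iio x).indicator (fun t => ENNReal.ofReal (φ t ^ 2 * w t)) t :=
        lintegral_congr fun t => by by_cases ht : t ∈ S ∩ Iio x <;> simp [ht, ofReal_sq_mul]
    _ = _ := by
        rw [lintegral_indicator hSx, Measure.restrict_restrict hSx,
          inter_eq_left.2 inter_subset_left]

theorem setIntegral_mul_indicator_Iio (hS : MeasurableSet S) {x y : ℝ} (hxy : x ≤ y) :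
    ∫ t in S ∩ Iio y, (φ t : ℂ) * (S ∩ Iio x).indicator (fun t => (φ t : ℂ)) t * (w t : ℂ)
      = ((∫ t in S ∩ Iio x, φ t ^ 2 * w t : ℝ) : ℂ) := by
  have hSx := hS.inter (measurableSet_Iio (a := x))
  have hind : (fun t => (φ t : ℂ) * (S ∩ Iio x).indicator (fun t => (φ t : ℂ)) t * (w t : ℂ))
      = (S ∩ Iio x).indicator fun t => ((φ t ^ 2 * w t : ℝ) : ℂ) := by
    ext t
    by_cases ht : t ∈ S ∩ Iio x <;> simp [ht, sq, mul_assoc]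
  rw [hind, integral_indicator hSx, Measure.restrict_restrict hSx,
    inter_eq_left.2 (inter_subset_inter_right S (Iio_subset_Iio hxy)), integral_complex_ofReal]

theorem lintegral_rpow_mul_lintegral_rpow_le_of_wL2norm_le (hS : MeasurableSet S)
    (hw0 : ∀ t ∈ S, 0 ≤ w t) (hφ : Measurable φ) {x : ℝ}
    (hint : IntegrableOn (fun t => φ t ^ 2 * w t) (S ∩ Iio x))
    (hpos : 0 < ∫ t in S ∩ Iio x, φ t ^ 2 * w t) {C : ℝ≥0∞}
    (hC : ∀ g : ℝ → ℂ, AEStronglyMeasurable g (volume.restrict S) → wL2norm S w g < ⊤ →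
      wL2norm S w (fun y => (ψ y : ℂ) * ∫ t in S ∩ Iio y, (φ t : ℂ) * g t * (w t : ℂ))
        ≤ C * wL2norm S w g) :
    (∫⁻ t in S ∩ Iio x, ENNReal.ofReal (φ t ^ 2 * w t)) ^ (1 / 2 : ℝ) *
      (∫⁻ t in S ∩ Ioi x, ENNReal.ofReal (ψ t ^ 2 * w t)) ^ (1 / 2 : ℝ) ≤ C := by
  have hSx := hS.inter (measurableSet_Iio (a := x))
  set g := (S ∩ Iio x).indicator fun t => (φ t : ℂ)
  set r := ∫ t in S ∩ Iio x, φ t ^ 2 * w t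
  set F := ∫⁻ t in S ∩ Iio x, ENNReal.ofReal (φ t ^ 2 * w t)
  set G := ∫⁻ t in S ∩ Ioi x, ENNReal.ofReal (ψ t ^ 2 * w t)
  have hFr : F = ENNReal.ofReal r := (ofReal_integral_eq_lintegral_ofReal hint
    (ae_restrict_of_forall_mem hSx fun t ht => mul_nonneg (sq_nonneg _) (hw0 t ht.1))).symm
  have hF0 : F ^ (1 / 2 : ℝ) ≠ 0 := by rw [hFr]; simpa using hpos
  have hFtop : F ^ (1 / 2 : ℝ) ≠ ⊤ := by rw [hFr]; simp
  have hg : AEStronglyMeasurable g (volume.restrict S) :=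
    ((Complex.measurable_ofReal.comp hφ).indicator hSx).aestronglyMeasurable
  have hgnorm : wL2norm S w g = F ^ (1 / 2 : ℝ) := wL2norm_indicator_Iio hS x
  -- to the right of `x`, the operator maps `g` to `r ψ`
  have hlower : F * G ^ (1 / 2 : ℝ)
      ≤ wL2norm S w (fun y => (ψ y : ℂ) * ∫ t in S ∩ Iio y, (φ t : ℂ) * g t * (w t : ℂ)) := by
    unfold wL2norm
    rw [← ENNReal.sq_rpow_one_half F, ← ENNReal.mul_rpow_of_nonneg _ _ (by norm_num),
      ← lintegral_const_mul' _ _ (pow_ne_top (hFr ▸ ofReal_ne_top))]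
    gcongr 1
    refine le_of_eq_of_le (setLIntegral_congr_fun (hS.inter measurableSet_Ioi) fun y hy => ?_)
      (lintegral_mono_set inter_subset_left)
    beta_reduce
    rw [setIntegral_mul_indicator_Iio hS hy.2.le, nnnorm_mul, ENNReal.coe_mul, mul_pow,
      mul_right_comm, ← ofReal_sq_mul, Complex.nnnorm_real, ← enorm_eq_nnnorm,
      Real.enorm_eq_ofReal hpos.le, hFr, mul_comm]
  have hmain : F ^ (1 / 2 : ℝ) * (F ^ (1 / 2 : ℝ) * G ^ (1 / 2 : ℝ)) ≤ F ^ (1 / 2 : ℝ) * C :=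
    calc F ^ (1 / 2 : ℝ) * (F ^ (1 / 2 : ℝ) * G ^ (1 / 2 : ℝ)) = F * G ^ (1 / 2 : ℝ) := by
          rw [← mul_assoc, ← sq, ENNReal.rpow_one_half_sq]
      _ ≤ C * wL2norm S w g := hlower.trans (hC g hg (hgnorm ▸ hFtop.lt_top))
      _ = F ^ (1 / 2 : ℝ) * C := by rw [hgnorm, mul_comm]
  exact (ENNReal.mul_le_mul_iff_right hF0 hFtop).1 hmain

end WeightedOperators

theorem chisholm_everitt_inequality_general
    (a b : EReal)
    (S : Set ℝ) (hS : S = {t : ℝ | a < (t : EReal) ∧ (t : EReal) < b})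
    (w φ ψ : ℝ → ℝ)
    (hw_meas : Measurable w) (hw_pos : ∀ t ∈ S, 0 < w t)
    (hφ_meas : Measurable φ) (hψ_meas : Measurable ψ)
    (hφ_loc : ∀ p ∈ S, ∀ q ∈ S, IntegrableOn (fun t => φ t ^ 2 * w t) (Icc p q))
    (hψ_loc : ∀ p ∈ S, ∀ q ∈ S, IntegrableOn (fun t => ψ t ^ 2 * w t) (Icc p q))
    (c : ℝ) (hc : c ∈ S)
    (hφ_left : IntegrableOn (fun t => φ t ^ 2 * w t) (S ∩ Iic c))
    (hψ_right : IntegrableOn (fun t => ψ t ^ 2 * w t) (S ∩ Ici c))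
    (hφ_pos : ∀ α ∈ S, 0 < ∫ t in S ∩ Iio α, φ t ^ 2 * w t)
    (hψ_pos : ∀ β ∈ S, 0 < ∫ t in S ∩ Ioi β, ψ t ^ 2 * w t)
    (A B : (ℝ → ℂ) → (ℝ → ℂ))
    (hA : ∀ g x, A g x = (φ x : ℂ) * ∫ t in S ∩ Ioi x, (ψ t : ℂ) * g t * (w t : ℂ))
    (hB : ∀ g x, B g x = (ψ x : ℂ) * ∫ t in S ∩ Iio x, (φ t : ℂ) * g t * (w t : ℂ))
    (K : ℝ≥0∞)
    (hK : K = ⨆ x ∈ S,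
      (∫⁻ t in S ∩ Iio x, ENNReal.ofReal (φ t ^ 2 * w t)) ^ (1 / 2 : ℝ) *
        (∫⁻ t in S ∩ Ioi x, ENNReal.ofReal (ψ t ^ 2 * w t)) ^ (1 / 2 : ℝ)) :
    ((∃ C : ℝ≥0, ∀ g : ℝ → ℂ, AEStronglyMeasurable g (volume.restrict S) →
        wL2norm S w g < ⊤ →
          wL2norm S w (A g) ≤ C * wL2norm S w g ∧
          wL2norm S w (B g) ≤ C * wL2norm S w g) ↔ K ≠ ⊤) ∧
    (∀ g : ℝ → ℂ, AEStronglyMeasurable g (volume.restrict S) →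
        wL2norm S w g < ⊤ →
          wL2norm S w (A g) ≤ 2 * K * wL2norm S w g ∧
          wL2norm S w (B g) ≤ 2 * K * wL2norm S w g) := by
  have hSm : MeasurableSet S := hS ▸
    (measurableSet_lt measurable_const continuous_coe_real_ereal.measurable).inter
      (measurableSet_lt continuous_coe_real_ereal.measurable measurable_const)
  have hw0 : ∀ t ∈ S, 0 ≤ w t := fun t ht => (hw_pos t ht).le
  have hφ_int : ∀ x ∈ S, IntegrableOn (fun t => φ t ^ 2 * w t) (S ∩ Iio x) := fun x hx =>
    hφ_left.inter_Iio_of_Icc (hφ_loc c hc x hx)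
  have hψ_int : ∀ x ∈ S, IntegrableOn (fun t => ψ t ^ 2 * w t) (S ∩ Ioi x) := fun x hx =>
    hψ_right.inter_Ioi_of_Icc (hψ_loc x hx c hc)
  have hKx : ∀ x ∈ S, (∫⁻ t in S ∩ Iio x, ENNReal.ofReal (φ t ^ 2 * w t)) ^ (1 / 2 : ℝ) *
      (∫⁻ t in S ∩ Ioi x, ENNReal.ofReal (ψ t ^ 2 * w t)) ^ (1 / 2 : ℝ) ≤ K := fun x hx =>
    hK ▸ le_iSup₂_of_le x hx le_rfl
  have hA' g : A g = _ := funext (hA g)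
  have hB' g : B g = _ := funext (hB g)
  have bound g (hg : AEStronglyMeasurable g (volume.restrict S)) :
      wL2norm S w (A g) ≤ 2 * K * wL2norm S w g ∧ wL2norm S w (B g) ≤ 2 * K * wL2norm S w g :=
    hA' g ▸ hB' g ▸ wL2norm_integral_operators_le hSm hw_meas hw0 hφ_meas hψ_meas
      (fun x hx => lintegral_ofReal_ne_zero_and_ne_top (hφ_int x hx) (hφ_pos x hx))
      (fun x hx => lintegral_ofReal_ne_zero_and_ne_top (hψ_int x hx) (hψ_pos x hx)) hKx hg
  refine ⟨⟨fun ⟨C, hC⟩ => ne_top_of_le_ne_top (coe_ne_top (r := C)) ?_,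
    fun hK_ne => ⟨(2 * K).toNNReal, fun g hg _ => ?_⟩⟩, fun g hg _ => bound g hg⟩
  · rw [hK]
    exact iSup₂_le fun x hx => lintegral_rpow_mul_lintegral_rpow_le_of_wL2norm_le hSm hw0
      hφ_meas (hφ_int x hx) (hφ_pos x hx) fun g hg hfin => hB' g ▸ (hC g hg hfin).2
  · rw [coe_toNNReal (mul_ne_top ofNat_ne_top hK_ne)]
    exact bound g hg

/-- The Chisholm–Everitt(–Littlejohn / Talenti / Tomaselli / Muckenhoupt) inequality:
with `S = (a,b)` (where `-∞ ≤ a < b ≤ ∞`), `w > 0` on `S`, and `φ, ψ` satisfying the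
local and endpoint square-integrability conditions, the operators
`(Ag)(x) = φ(x) ∫_x^b ψ g w` and `(Bg)(x) = ψ(x) ∫_a^x φ g w` are bounded on
`L²(S; w)` if and only if `K := sup_x (∫_a^x φ²w)^{1/2} (∫_x^b ψ²w)^{1/2}` is finite,
in which case `‖Af‖ ≤ 2K‖f‖` and `‖Bg‖ ≤ 2K‖g‖`. -/
theorem chisholm_everitt_inequality
    (a b : EReal) (hab : a < b)
    (S : Set ℝ) (hS : S = {t : ℝ | a < (t : EReal) ∧ (t : EReal) < b})
    (w φ ψ : ℝ → ℝ)
    (hw_meas : Measurable w) (hw_pos : ∀ t ∈ S, 0 < w t)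
    (hφ_meas : Measurable φ) (hψ_meas : Measurable ψ)
    (hφ_loc : ∀ p ∈ S, ∀ q ∈ S, IntegrableOn (fun t => φ t ^ 2 * w t) (Icc p q))
    (hψ_loc : ∀ p ∈ S, ∀ q ∈ S, IntegrableOn (fun t => ψ t ^ 2 * w t) (Icc p q))
    (c : ℝ) (hc : c ∈ S)
    (hφ_left : IntegrableOn (fun t => φ t ^ 2 * w t) (S ∩ Iic c))
    (hψ_right : IntegrableOn (fun t => ψ t ^ 2 * w t) (S ∩ Ici c))
    (hφ_pos : ∀ α ∈ S, 0 < ∫ t in S ∩ Iio α, φ t ^ 2 * w t)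
    (hψ_pos : ∀ β ∈ S, 0 < ∫ t in S ∩ Ioi β, ψ t ^ 2 * w t)
    (A B : (ℝ → ℂ) → (ℝ → ℂ))
    (hA : ∀ g x, A g x = (φ x : ℂ) * ∫ t in S ∩ Ioi x, (ψ t : ℂ) * g t * (w t : ℂ))
    (hB : ∀ g x, B g x = (ψ x : ℂ) * ∫ t in S ∩ Iio x, (φ t : ℂ) * g t * (w t : ℂ))
    (K : ℝ≥0∞)
    (hK : K = ⨆ x ∈ S,
      (∫⁻ t in S ∩ Iio x, ENNReal.ofReal (φ t ^ 2 * w t)) ^ (1 / 2 : ℝ) *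
        (∫⁻ t in S ∩ Ioi x, ENNReal.ofReal (ψ t ^ 2 * w t)) ^ (1 / 2 : ℝ)) :
    ((∃ C : ℝ≥0, ∀ g : ℝ → ℂ, AEStronglyMeasurable g (volume.restrict S) →
        wL2norm S w g < ⊤ →
          wL2norm S w (A g) ≤ C * wL2norm S w g ∧
          wL2norm S w (B g) ≤ C * wL2norm S w g) ↔ K ≠ ⊤) ∧
    (∀ g : ℝ → ℂ, AEStronglyMeasurable g (volume.restrict S) →
        wL2norm S w g < ⊤ →
          wL2norm S w (A g) ≤ 2 * K * wL2norm S w g ∧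
          wL2norm S w (B g) ≤ 2 * K * wL2norm S w g) :=
  chisholm_everitt_inequality_general a b S hS w φ ψ hw_meas hw_pos hφ_meas hψ_meas hφ_loc hψ_loc c
    hc hφ_left hψ_right hφ_pos hψ_pos A B hA hB K hK
end

section
/- If f ∈ Δ, the maximal domain of the Jacobi expression ℓ[·] in L²((-1,1); (1-x²)^{-1}dx), then f' ∈ L²((-1,1); dx) (the Dirichlet condition). In particular every f ∈ Δ extends to an absolutely continuous function on [-1,1]. -/
open MeasureTheory Set intervalIntegral

/-- Membership in the maximal domain `Δ` of the Jacobi expression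
`ℓ[y](x) = -(1-x²)y''(x) + k·y(x)` in `L²((-1,1); (1-x²)⁻¹ dx)`, encoded via the
derivative functions `f'` and `f''`: `f, f' ∈ AC_loc(-1,1)` (with locally integrable
derivatives `f'`, `f''` and the fundamental theorem of calculus representation),
`f ∈ L²((-1,1); (1-x²)⁻¹ dx)` and `ℓ[f] ∈ L²((-1,1); (1-x²)⁻¹ dx)`. -/
def InJacobiMaxDomain (k : ℝ) (f f' f'' : ℝ → ℂ) : Prop :=
  (∀ x ∈ Ioo (-1 : ℝ) 1, ∀ y ∈ Ioo (-1 : ℝ) 1, IntervalIntegrable f' volume x y) ∧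
  (∀ x ∈ Ioo (-1 : ℝ) 1, ∀ y ∈ Ioo (-1 : ℝ) 1, IntervalIntegrable f'' volume x y) ∧
  (∀ x ∈ Ioo (-1 : ℝ) 1, ∀ y ∈ Ioo (-1 : ℝ) 1, f y - f x = ∫ t in x..y, f' t) ∧
  (∀ x ∈ Ioo (-1 : ℝ) 1, ∀ y ∈ Ioo (-1 : ℝ) 1, f' y - f' x = ∫ t in x..y, f'' t) ∧
  IntegrableOn (fun x => ‖f x‖ ^ 2 * (1 - x ^ 2)⁻¹) (Ioo (-1 : ℝ) 1) ∧
  IntegrableOn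
    (fun x => ‖-((1 - x ^ 2 : ℝ) : ℂ) * f'' x + (k : ℂ) * f x‖ ^ 2 * (1 - x ^ 2)⁻¹)
    (Ioo (-1 : ℝ) 1)

open Filter ComplexConjugate

/-!
Integrating by parts on `[a, b] ⊂ (-1, 1)` gives the energy identity
`∫_a^b |f'|² = Re (f' f̄)(b) - Re (f' f̄)(a) - Re ∫_a^b f'' f̄`, and `|f'' f̄|` is dominated by an
integrable function because `(1 - x²) f'' = k f - ℓ[f]` with `f, ℓ[f] ∈ L²((1 - x²)⁻¹ dx)`.
Since `Re (f' f̄) = (|f|²)' / 2` while `|f|² / (1 - x)` is integrable near `1`, `|f|²` cannot be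
increasing all the way up to `1`: there are points arbitrarily close to `1` where `Re (f' f̄) ≤ 0`,
and symmetrically points arbitrarily close to `-1` where `Re (f' f̄) ≥ 0`. Taking `a` and `b` among
them bounds `∫_a^b |f'|²` uniformly. Hence `f' ∈ L² ⊆ L¹`, and `f` is the primitive of an
integrable function on `[-1, 1]`.
-/

section Primitive

variable {E : Type*} [NormedAddCommGroup E] [NormedSpace ℝ E]
  {a b : ℝ} {u u' : ℝ → E}

theorem continuousOn_of_eq_primitive
    (hint : ∀ x ∈ Ioo a b, ∀ y ∈ Ioo a b, IntervalIntegrable u' volume x y)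
    (hftc : ∀ x ∈ Ioo a b, ∀ y ∈ Ioo a b, u y - u x = ∫ t in x..y, u' t) :
    ContinuousOn u (Ioo a b) := by
  refine isOpen_Ioo.continuousOn_iff.2 fun x hx => ?_
  obtain ⟨c, hac, hcx⟩ := exists_between hx.1
  obtain ⟨d, hxd, hdb⟩ := exists_between hx.2
  have hc : c ∈ Ioo a b := ⟨hac, hcx.trans hx.2⟩
  have hd : d ∈ Ioo a b := ⟨hx.1.trans hxd, hdb⟩
  have hprim : ContinuousAt (fun y => u c + ∫ t in c..y, u' t) x := by
    refine (continuousOn_const.add (continuousOn_primitive_interval' (hint c hc d hd)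
      left_mem_uIcc)).continuousAt ?_
    rw [uIcc_of_le (hcx.trans hxd).le]
    exact Icc_mem_nhds hcx hxd
  refine hprim.congr ?_
  filter_upwards [isOpen_Ioo.mem_nhds hx] with y hy
  rw [← hftc c hc y hy, add_sub_cancel]

theorem hasDerivAt_of_eq_primitive [CompleteSpace E]
    (hftc : ∀ x ∈ Ioo a b, ∀ y ∈ Ioo a b, u y - u x = ∫ t in x..y, u' t)
    (hcont : ContinuousOn u' (Ioo a b)) {x : ℝ} (hx : x ∈ Ioo a b) :
    HasDerivAt u (u' x) x := by
  have hprim : HasDerivAt (fun y => ∫ t in x..y, u' t) (u' x) x :=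
    integral_hasDerivAt_right IntervalIntegrable.refl
      (hcont.stronglyMeasurableAtFilter isOpen_Ioo x hx)
      (hcont.continuousAt (isOpen_Ioo.mem_nhds hx))
  refine (hprim.const_add (u x)).congr_of_eventuallyEq ?_
  filter_upwards [isOpen_Ioo.mem_nhds hx] with y hy
  rw [← hftc x hx y hy, add_sub_cancel]

theorem exists_continuousOn_Icc_eq_primitive (hab : a < b)
    (hint : IntervalIntegrable u' volume a b)
    (hftc : ∀ x ∈ Ioo a b, ∀ y ∈ Ioo a b, u y - u x = ∫ t in x..y, u' t) :
    ∃ g : ℝ → E, ContinuousOn g (Icc a b) ∧ (∀ x ∈ Ioo a b, g x = u x) ∧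
      ∀ x ∈ Icc a b, ∀ y ∈ Icc a b, g y - g x = ∫ t in x..y, u' t := by
  obtain ⟨c, hc⟩ := nonempty_Ioo.2 hab
  have hcu : c ∈ uIcc a b := by rw [uIcc_of_le hab.le]; exact Ioo_subset_Icc_self hc
  refine ⟨fun y => u c + ∫ t in c..y, u' t, ?_, fun x hx => ?_, fun x hx y hy => ?_⟩
  · rw [← uIcc_of_le hab.le]
    exact continuousOn_const.add (continuousOn_primitive_interval' hint hcu)
  · simp only [← hftc c hc x hx, add_sub_cancel]
  · rw [← uIcc_of_le hab.le] at hx hy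
    rw [add_sub_add_left_eq_sub, integral_interval_sub_left
      (hint.mono_set (uIcc_subset_uIcc hcu hy)) (hint.mono_set (uIcc_subset_uIcc hcu hx))]

end Primitive

section IntegrationByParts

variable {𝕜 : Type*} [RCLike 𝕜] {a b : ℝ} {φ ψ : ℝ → 𝕜}

theorem integral_mul_primitive_add_integral_primitive_mul (hab : a ≤ b)
    (hφ : IntervalIntegrable φ volume a b) (hψ : IntervalIntegrable ψ volume a b) :
    (∫ x in a..b, φ x * ∫ t in a..x, ψ t) + (∫ x in a..b, (∫ t in a..x, φ t) * ψ x) =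
      (∫ x in a..b, φ x) * ∫ x in a..b, ψ x := by
  -- Split `(a, b]²` along the diagonal; Fubini turns each half into one of the two terms.
  set μ := volume.restrict (Ioc a b)
  set G : ℝ × ℝ → 𝕜 := fun p => φ p.1 * ψ p.2
  have hG : Integrable G (μ.prod μ) := hφ.1.mul_prod hψ.1
  set S : Set (ℝ × ℝ) := {p | p.2 ≤ p.1}
  have hS : MeasurableSet S := measurableSet_le measurable_snd measurable_fst
  have lower : ∫ p in S, G p ∂μ.prod μ = ∫ x in a..b, φ x * ∫ t in a..x, ψ t := by
    rw [← MeasureTheory.integral_indicator hS, integral_prod _ (hG.indicator hS),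
      integral_of_le hab]
    refine setIntegral_congr_fun measurableSet_Ioc fun x hx => ?_
    change ∫ t, (Iic x).indicator (fun t => φ x * ψ t) t ∂μ = _
    rw [MeasureTheory.integral_indicator measurableSet_Iic,
      Measure.restrict_restrict measurableSet_Iic, Iic_inter_Ioc_of_le hx.2,
      MeasureTheory.integral_const_mul, integral_of_le hx.1.le]
  have upper : ∫ p in Sᶜ, G p ∂μ.prod μ = ∫ x in a..b, (∫ t in a..x, φ t) * ψ x := by
    rw [← MeasureTheory.integral_indicator hS.compl, integral_prod_symm _ (hG.indicator hS.compl),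
      integral_of_le hab]
    refine setIntegral_congr_fun measurableSet_Ioc fun x hx => ?_
    have hslice : (fun t => Sᶜ.indicator G (t, x)) = (Iio x).indicator (fun t => φ t * ψ x) := by
      ext t
      simp [S, G, indicator_apply]
    have hIio : Iio x ∩ Ioc a b = Ioo a x := by
      ext t
      simp only [mem_inter_iff, mem_Iio, mem_Ioc, mem_Ioo]
      grind
    rw [hslice, MeasureTheory.integral_indicator measurableSet_Iio,
      Measure.restrict_restrict measurableSet_Iio, hIio, MeasureTheory.integral_mul_const, integral_of_le hx.1.le, integral_Ioc_eq_integral_Ioo]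
  rw [← lower, ← upper, integral_add_compl hS hG, integral_prod_mul, integral_of_le hab,
    integral_of_le hab]

theorem integral_mul_add_mul_eq_sub_of_eq_primitive {u v : ℝ → 𝕜} (hab : a ≤ b)
    (hφ : IntervalIntegrable φ volume a b) (hψ : IntervalIntegrable ψ volume a b)
    (hu : ∀ x ∈ Icc a b, u x - u a = ∫ t in a..x, φ t)
    (hv : ∀ x ∈ Icc a b, v x - v a = ∫ t in a..x, ψ t) :
    ∫ x in a..b, (φ x * v x + u x * ψ x) = u b * v b - u a * v a := by
  have hprim : ∀ {χ : ℝ → 𝕜}, IntervalIntegrable χ volume a b →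
      ContinuousOn (fun x => ∫ t in a..x, χ t) (uIcc a b) := fun hχ =>
    continuousOn_primitive_interval' hχ left_mem_uIcc
  have hφV : IntervalIntegrable (fun x => φ x * ∫ t in a..x, ψ t) volume a b :=
    hφ.mul_continuousOn (hprim hψ)
  have hUψ : IntervalIntegrable (fun x => (∫ t in a..x, φ t) * ψ x) volume a b :=
    hψ.continuousOn_mul (hprim hφ)
  have hsplit : EqOn (fun x => φ x * v x + u x * ψ x) (fun x => (v a * φ x + u a * ψ x) +
      (φ x * (∫ t in a..x, ψ t) + (∫ t in a..x, φ t) * ψ x)) (uIcc a b) := by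
    intro x hx
    rw [uIcc_of_le hab] at hx
    simp only [← hu x hx, ← hv x hx]
    ring
  rw [integral_congr hsplit, integral_add ((hφ.const_mul _).add (hψ.const_mul _)) (hφV.add hUψ),
    integral_add (hφ.const_mul _) (hψ.const_mul _), integral_add hφV hUψ,
    integral_mul_primitive_add_integral_primitive_mul hab hφ hψ,
    intervalIntegral.integral_const_mul, intervalIntegral.integral_const_mul,
    ← hu b (right_mem_Icc.2 hab), ← hv b (right_mem_Icc.2 hab)]
  ring

end IntegrationByParts

section Endpoint

variable {a b : ℝ} {N N' : ℝ → ℝ}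

theorem exists_deriv_nonpos_of_intervalIntegrable_div_sub_right (hab : a < b)
    (hN : ∀ x ∈ Ioo a b, 0 ≤ N x) (hderiv : ∀ x ∈ Ioo a b, HasDerivAt N (N' x) x)
    (hint : IntervalIntegrable (fun x => N x / (b - x)) volume a b) :
    ∃ x ∈ Ioo a b, N' x ≤ 0 := by
  by_contra! hpos
  have hmono : StrictMonoOn N (Ioo a b) :=
    strictMonoOn_of_hasDerivWithinAt_pos (convex_Ioo a b)
      (fun x hx => (hderiv x hx).continuousAt.continuousWithinAt)
      (fun x hx => (hderiv x (interior_subset hx)).hasDerivWithinAt)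
      (fun x hx => hpos x (interior_subset hx))
  obtain ⟨c, hac, hcb⟩ := exists_between hab
  obtain ⟨c', hac', hc'c⟩ := exists_between hac
  have hNc : 0 < N c :=
    (hN c' ⟨hac', hc'c.trans hcb⟩).trans_lt (hmono ⟨hac', hc'c.trans hcb⟩ ⟨hac, hcb⟩ hc'c)
  -- Since `N ≥ N c > 0` on `(c, b)`, integrability of `N / (b - x)` forces that of `1 / (b - x)`.
  have hinv : IntervalIntegrable (fun x => (x - b)⁻¹) volume c b := by
    refine ((hint.mono_set (uIcc_subset_uIcc (mem_uIcc_of_le hac.le hcb.le)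
      right_mem_uIcc)).const_mul (N c)⁻¹).mono_fun' (by fun_prop) ?_
    rw [uIoc_of_le hcb.le]
    filter_upwards [ae_restrict_mem measurableSet_Ioc,
      ae_restrict_of_ae (Measure.ae_ne volume b)] with x hx hxb
    have hxb : x < b := lt_of_le_of_ne hx.2 hxb
    have hNx : N c ≤ N x := (hmono ⟨hac, hcb⟩ ⟨hac.trans hx.1, hxb⟩ hx.1).le
    rw [norm_inv, Real.norm_eq_abs, abs_sub_comm, abs_of_pos (sub_pos.2 hxb)]
    calc (b - x)⁻¹ ≤ ((N c)⁻¹ * N x) * (b - x)⁻¹ :=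
          le_mul_of_one_le_left (inv_nonneg.2 (sub_pos.2 hxb).le) ((one_le_inv_mul₀ hNc).2 hNx)
      _ = (N c)⁻¹ * (N x / (b - x)) := by ring
  rw [intervalIntegrable_sub_inv_iff] at hinv
  exact hinv.elim hcb.ne (· right_mem_uIcc)

theorem exists_deriv_nonneg_of_intervalIntegrable_div_sub_left (hab : a < b)
    (hN : ∀ x ∈ Ioo a b, 0 ≤ N x) (hderiv : ∀ x ∈ Ioo a b, HasDerivAt N (N' x) x)
    (hint : IntervalIntegrable (fun x => N x / (x - a)) volume a b) :
    ∃ x ∈ Ioo a b, 0 ≤ N' x := by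
  have hneg : ∀ {x}, x ∈ Ioo (-b) (-a) → -x ∈ Ioo a b := fun hx =>
    ⟨lt_neg_of_lt_neg hx.2, neg_lt_of_neg_lt hx.1⟩
  obtain ⟨x, hx, hN'x⟩ := exists_deriv_nonpos_of_intervalIntegrable_div_sub_right
    (N := fun x => N (-x)) (N' := fun x => -N' (-x)) (neg_lt_neg hab)
    (fun x hx => hN _ (hneg hx))
    (fun x hx => by
      simpa [Function.comp_def] using (hderiv _ (hneg hx)).comp x (hasDerivAt_neg x))
    (by simpa [sub_eq_add_neg, add_comm] using ((IntervalIntegrable.iff_comp_neg).1 hint).symm)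
  exact ⟨-x, hneg hx, neg_nonpos.1 hN'x⟩

end Endpoint

theorem norm_mul_norm_le_sq_add_sq_div {k t : ℝ} (ht : 0 < t) (y y'' : ℂ) :
    ‖y''‖ * ‖y‖ ≤ ((|k| + 1) * ‖y‖ ^ 2 + ‖-(t : ℂ) * y'' + k * y‖ ^ 2) / t := by
  set g := -(t : ℂ) * y'' + k * y
  have hty : t * ‖y''‖ ≤ |k| * ‖y‖ + ‖g‖ := by
    calc t * ‖y''‖ = ‖k * y - g‖ := by
          rw [show (k : ℂ) * y - g = t * y'' by ring, norm_mul, Complex.norm_real,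
            Real.norm_of_nonneg ht.le]
      _ ≤ |k| * ‖y‖ + ‖g‖ := by
          grw [norm_sub_le, norm_mul, Complex.norm_real, Real.norm_eq_abs]
  rw [le_div_iff₀ ht]
  nlinarith [mul_le_mul_of_nonneg_right hty (norm_nonneg y), sq_nonneg (‖g‖ - ‖y‖),
    norm_nonneg g, norm_nonneg y]

namespace InJacobiMaxDomain

variable {k : ℝ} {f f' f'' : ℝ → ℂ}

theorem continuousOn (hf : InJacobiMaxDomain k f f' f'') : ContinuousOn f (Ioo (-1) 1) :=
  continuousOn_of_eq_primitive hf.1 hf.2.2.1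

theorem continuousOn_deriv (hf : InJacobiMaxDomain k f f' f'') : ContinuousOn f' (Ioo (-1) 1) :=
  continuousOn_of_eq_primitive hf.2.1 hf.2.2.2.1

theorem hasDerivAt (hf : InJacobiMaxDomain k f f' f'') {x : ℝ} (hx : x ∈ Ioo (-1 : ℝ) 1) :
    HasDerivAt f (f' x) x :=
  hasDerivAt_of_eq_primitive hf.2.2.1 hf.continuousOn_deriv hx

theorem hasDerivAt_norm_sq (hf : InJacobiMaxDomain k f f' f'') {x : ℝ}
    (hx : x ∈ Ioo (-1 : ℝ) 1) :
    HasDerivAt (fun y => ‖f y‖ ^ 2) (2 * (f' x * conj (f x)).re) x := by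
  simpa only [Complex.inner] using (hf.hasDerivAt hx).norm_sq

theorem integrableOn_norm_sq_div_one_sub (hf : InJacobiMaxDomain k f f' f'') :
    IntegrableOn (fun x => ‖f x‖ ^ 2 / (1 - x)) (Ioo (-1) 1) := by
  refine (IntegrableOn.continuousOn_mul_of_subset (g := fun x : ℝ => 1 + x) (by fun_prop)
    hf.2.2.2.2.1 isCompact_Icc measurableSet_Ioo Ioo_subset_Icc_self).congr_fun
    (fun x hx => ?_) measurableSet_Ioo
  have h₁ : 1 + x ≠ 0 := by linarith [hx.1]
  have h₂ : 1 - x ≠ 0 := by linarith [hx.2]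
  dsimp only
  rw [show 1 - x ^ 2 = (1 - x) * (1 + x) by ring]
  field_simp

theorem integrableOn_norm_sq_div_one_add (hf : InJacobiMaxDomain k f f' f'') :
    IntegrableOn (fun x => ‖f x‖ ^ 2 / (1 + x)) (Ioo (-1) 1) := by
  refine (IntegrableOn.continuousOn_mul_of_subset (g := fun x : ℝ => 1 - x) (by fun_prop)
    hf.2.2.2.2.1 isCompact_Icc measurableSet_Ioo Ioo_subset_Icc_self).congr_fun
    (fun x hx => ?_) measurableSet_Ioo
  have h₁ : 1 + x ≠ 0 := by linarith [hx.1]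
  have h₂ : 1 - x ≠ 0 := by linarith [hx.2]
  dsimp only
  rw [show 1 - x ^ 2 = (1 - x) * (1 + x) by ring]
  field_simp

theorem exists_re_deriv_mul_conj_nonpos (hf : InJacobiMaxDomain k f f' f'') {c : ℝ}
    (hc : c ∈ Ioo (-1 : ℝ) 1) : ∃ x ∈ Ioo c 1, (f' x * conj (f x)).re ≤ 0 := by
  have hsub : Ioo c 1 ⊆ Ioo (-1) 1 := Ioo_subset_Ioo_left hc.1.le
  obtain ⟨x, hx, hle⟩ := exists_deriv_nonpos_of_intervalIntegrable_div_sub_right hc.2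
    (fun _ _ => sq_nonneg _) (fun x hx => hf.hasDerivAt_norm_sq (hsub hx))
    ((intervalIntegrable_iff_integrableOn_Ioo_of_le hc.2.le).2
      (hf.integrableOn_norm_sq_div_one_sub.mono_set hsub))
  exact ⟨x, hx, by linarith⟩

theorem exists_re_deriv_mul_conj_nonneg (hf : InJacobiMaxDomain k f f' f'') {c : ℝ}
    (hc : c ∈ Ioo (-1 : ℝ) 1) : ∃ x ∈ Ioo (-1) c, 0 ≤ (f' x * conj (f x)).re := by
  have hsub : Ioo (-1) c ⊆ Ioo (-1) 1 := Ioo_subset_Ioo_right hc.2.le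
  obtain ⟨x, hx, hle⟩ := exists_deriv_nonneg_of_intervalIntegrable_div_sub_left hc.1
    (fun _ _ => sq_nonneg _) (fun x hx => hf.hasDerivAt_norm_sq (hsub hx))
    ((intervalIntegrable_iff_integrableOn_Ioo_of_le hc.1.le).2
      (by simpa [sub_neg_eq_add, add_comm] using
        hf.integrableOn_norm_sq_div_one_add.mono_set hsub))
  exact ⟨x, hx, by linarith⟩

theorem integral_norm_deriv_sq_eq (hf : InJacobiMaxDomain k f f' f'') {a b : ℝ}
    (ha : a ∈ Ioo (-1 : ℝ) 1) (hb : b ∈ Ioo (-1 : ℝ) 1) (hab : a ≤ b) :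
    ∫ x in a..b, ‖f' x‖ ^ 2 = (f' b * conj (f b)).re - (f' a * conj (f a)).re -
      (∫ x in a..b, f'' x * conj (f x)).re := by
  have hsub : uIcc a b ⊆ Ioo (-1) 1 := by
    rw [uIcc_of_le hab]; exact Icc_subset_Ioo ha.1 hb.2
  have hsub' : Icc a b ⊆ Ioo (-1) 1 := uIcc_of_le hab ▸ hsub
  have hff : IntervalIntegrable (fun x => f'' x * conj (f x)) volume a b :=
    (hf.2.1 a ha b hb).mul_continuousOn (hf.continuousOn.mono hsub).star
  have hf'f' : IntervalIntegrable (fun x => f' x * conj (f' x)) volume a b :=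
    ((hf.continuousOn_deriv.mono hsub).mul
      (hf.continuousOn_deriv.mono hsub).star).intervalIntegrable
  have hparts := integral_mul_add_mul_eq_sub_of_eq_primitive (φ := f'')
    (ψ := fun x => conj (f' x)) (u := f') (v := fun x => conj (f x)) hab (hf.2.1 a ha b hb)
    (hf.continuousOn_deriv.mono hsub).star.intervalIntegrable
    (fun x hx => hf.2.2.2.1 a ha x (hsub' hx))
    (fun x hx => by rw [intervalIntegral_conj, ← map_sub, hf.2.2.1 a ha x (hsub' hx)])
  rw [integral_add hff hf'f'] at hparts
  simp only [Complex.mul_conj, Complex.normSq_eq_norm_sq, integral_ofReal] at hparts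
  have := congrArg Complex.re hparts
  simp only [Complex.add_re, Complex.sub_re, Complex.ofReal_re] at this
  linarith

theorem exists_integral_norm_deriv_sq_le (hf : InJacobiMaxDomain k f f' f'') :
    ∃ M, ∀ a ∈ Ioo (-1 : ℝ) 1, ∀ b ∈ Ioo (-1 : ℝ) 1, a ≤ b →
      ∫ x in a..b, ‖f' x‖ ^ 2 ≤ (f' b * conj (f b)).re - (f' a * conj (f a)).re + M := by
  set D : ℝ → ℝ := fun x => (|k| + 1) * (‖f x‖ ^ 2 * (1 - x ^ 2)⁻¹) +
    ‖-((1 - x ^ 2 : ℝ) : ℂ) * f'' x + (k : ℂ) * f x‖ ^ 2 * (1 - x ^ 2)⁻¹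
  have hD : IntegrableOn D (Ioo (-1) 1) := (hf.2.2.2.2.1.const_mul _).add hf.2.2.2.2.2
  have hDle : ∀ x ∈ Ioo (-1 : ℝ) 1, ‖f'' x‖ * ‖f x‖ ≤ D x := fun x hx => by
    have hx2 : 0 < 1 - x ^ 2 := by nlinarith [hx.1, hx.2]
    convert norm_mul_norm_le_sq_add_sq_div (k := k) hx2 (f x) (f'' x) using 1
    simp only [D, div_eq_mul_inv]
    ring
  refine ⟨∫ x in Ioo (-1) 1, D x, fun a ha b hb hab => ?_⟩
  have hsub : Icc a b ⊆ Ioo (-1) 1 := Icc_subset_Ioo ha.1 hb.2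
  have hbound : ‖∫ x in a..b, f'' x * conj (f x)‖ ≤ ∫ x in Ioo (-1) 1, D x :=
    calc ‖∫ x in a..b, f'' x * conj (f x)‖
        ≤ ∫ x in a..b, ‖f'' x * conj (f x)‖ := norm_integral_le_integral_norm hab
      _ ≤ ∫ x in a..b, D x := by
          refine integral_mono_on hab ?_ ?_ fun x hx => ?_
          · exact ((hf.2.1 a ha b hb).mul_continuousOn
              ((hf.continuousOn.mono (uIcc_of_le hab ▸ hsub)).star)).norm
          · exact (hD.mono_set (uIcc_of_le hab ▸ hsub)).intervalIntegrable
          · simpa only [norm_mul, Complex.norm_conj] using hDle x (hsub hx)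
      _ ≤ ∫ x in Ioo (-1) 1, D x := by
          rw [integral_of_le hab]
          refine setIntegral_mono_set hD ?_ (Ioc_subset_Icc_self.trans hsub).eventuallyLE
          filter_upwards [ae_restrict_mem measurableSet_Ioo] with x hx
          exact (mul_nonneg (norm_nonneg _) (norm_nonneg _)).trans (hDle x hx)
  rw [hf.integral_norm_deriv_sq_eq ha hb hab]
  linarith [neg_le_of_abs_le ((Complex.abs_re_le_norm _).trans hbound)]

theorem exists_integral_norm_deriv_sq_le_const (hf : InJacobiMaxDomain k f f' f'') :
    ∃ M, ∀ a ∈ Ioo (-1 : ℝ) 1, ∀ b ∈ Ioo (-1 : ℝ) 1, a ≤ b → ∫ x in a..b, ‖f' x‖ ^ 2 ≤ M := by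
  obtain ⟨M, hM⟩ := hf.exists_integral_norm_deriv_sq_le
  refine ⟨M, fun a ha b hb hab => ?_⟩
  -- Enlarge `[a, b]` to some `[a₀, b₀]` on which both boundary terms have the favourable sign.
  obtain ⟨a₀, ha₀, hRa₀⟩ := hf.exists_re_deriv_mul_conj_nonneg ha
  obtain ⟨b₀, hb₀, hRb₀⟩ := hf.exists_re_deriv_mul_conj_nonpos hb
  have ha₀' : a₀ ∈ Ioo (-1 : ℝ) 1 := ⟨ha₀.1, ha₀.2.trans ha.2⟩
  have hb₀' : b₀ ∈ Ioo (-1 : ℝ) 1 := ⟨hb.1.trans hb₀.1, hb₀.2⟩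
  have hab₀ : a₀ ≤ b₀ := (ha₀.2.trans_le hab |>.trans hb₀.1).le
  calc ∫ x in a..b, ‖f' x‖ ^ 2
      ≤ ∫ x in a₀..b₀, ‖f' x‖ ^ 2 :=
        integral_mono_interval ha₀.2.le hab hb₀.1.le (ae_of_all _ fun _ => sq_nonneg _)
          ((hf.continuousOn_deriv.mono ((uIcc_of_le hab₀).trans_subset
            (Icc_subset_Ioo ha₀'.1 hb₀'.2))).norm.pow 2).intervalIntegrable
    _ ≤ M := by linarith [hM a₀ ha₀' b₀ hb₀' hab₀]

theorem integrableOn_norm_deriv_sq (hf : InJacobiMaxDomain k f f' f'') :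
    IntegrableOn (fun x => ‖f' x‖ ^ 2) (Ioo (-1) 1) := by
  obtain ⟨M, hM⟩ := hf.exists_integral_norm_deriv_sq_le_const
  obtain ⟨b, -, hb, hb1⟩ := exists_seq_strictMono_tendsto' (zero_lt_one' ℝ)
  have hbI : ∀ n, b n ∈ Ioo (-1 : ℝ) 1 := fun n => ⟨by linarith [(hb n).1], (hb n).2⟩
  have hnI : ∀ n, -b n ∈ Ioo (-1 : ℝ) 1 :=
    fun n => ⟨by linarith [(hb n).2], by linarith [(hb n).1]⟩
  have hIcc : ∀ n, Icc (-b n) (b n) ⊆ Ioo (-1) 1 := fun n => Icc_subset_Ioo (hnI n).1 (hbI n).2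
  refine (integrableOn_Ioc_of_intervalIntegral_norm_bounded (I := M) (a := fun n => -b n)
    (b := b) (fun n => ?_) (by simpa using hb1.neg) hb1 (Eventually.of_forall fun n => ?_)).mono_set
    Ioo_subset_Ioc_self
  · exact (((hf.continuousOn_deriv.mono (hIcc n)).norm.pow 2).integrableOn_Icc).mono_set
      Ioc_subset_Icc_self
  · have hn : -b n ≤ b n := by linarith [(hb n).1]
    simpa only [norm_pow, norm_norm, integral_of_le hn] using hM _ (hnI n) _ (hbI n) hn

end InJacobiMaxDomain

theorem dirichlet_condition_general (k : ℝ) (f f' f'' : ℝ → ℂ)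
    (hf : InJacobiMaxDomain k f f' f'') :
    IntegrableOn (fun x => ‖f' x‖ ^ 2) (Ioo (-1 : ℝ) 1) ∧
    ∃ g : ℝ → ℂ, ContinuousOn g (Icc (-1 : ℝ) 1) ∧ (∀ x ∈ Ioo (-1 : ℝ) 1, g x = f x) ∧
      IntervalIntegrable f' volume (-1) 1 ∧
      ∀ x ∈ Icc (-1 : ℝ) 1, ∀ y ∈ Icc (-1 : ℝ) 1, g y - g x = ∫ t in x..y, f' t := by
  have hL2 := hf.integrableOn_norm_deriv_sq
  have hf' : IntervalIntegrable f' volume (-1) 1 :=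
    (intervalIntegrable_iff_integrableOn_Ioo_of_le (by norm_num)).2
      ((memLp_two_iff_integrable_sq_norm
        (hf.continuousOn_deriv.aestronglyMeasurable measurableSet_Ioo)).2 hL2 |>.integrable
          one_le_two)
  obtain ⟨g, hg, hgf, hgf'⟩ := exists_continuousOn_Icc_eq_primitive (by norm_num) hf' hf.2.2.1
  exact ⟨hL2, g, hg, hgf, hf', hgf'⟩

/-- The Dirichlet condition: every `f` in the maximal domain `Δ` has `f' ∈ L²(-1,1)`;
in particular `f` extends to an absolutely continuous function on `[-1,1]`. -/
theorem dirichlet_condition (k : ℝ) (hk : 0 ≤ k) (f f' f'' : ℝ → ℂ)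
    (hf : InJacobiMaxDomain k f f' f'') :
    IntegrableOn (fun x => ‖f' x‖ ^ 2) (Ioo (-1 : ℝ) 1) ∧
    ∃ g : ℝ → ℂ, ContinuousOn g (Icc (-1 : ℝ) 1) ∧ (∀ x ∈ Ioo (-1 : ℝ) 1, g x = f x) ∧
      IntervalIntegrable f' volume (-1) 1 ∧
      ∀ x ∈ Icc (-1 : ℝ) 1, ∀ y ∈ Icc (-1 : ℝ) 1, g y - g x = ∫ t in x..y, f' t :=
  dirichlet_condition_general k f f' f'' hf
end

section
/- If f ∈ Δ, the maximal domain of the Jacobi expression ℓ[·] in L²((-1,1); (1-x²)^{-1}dx), then the limits lim_{x→1⁻} f(x) and lim_{x→-1⁺} f(x) exist and both equal 0. -/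
/-!
The weighted `L²` bounds on `f` and `ℓ[f]` give `∫ (1 - x²) |f''|² < ∞`. Near `x = 1`, the
AM-GM inequality `|f''| ≤ ((1 - t²) |f''|² + (1 - t)⁻¹) / 2` then bounds `|f'(y)|` by a constant
plus `-log (1 - y) / 2`, which is integrable, so `f' ∈ L¹(0, 1)` and `f` has a limit `L` at `1`.
If `L ≠ 0`, then `|f|² / (1 - x²) ≥ |L|² / (8 (1 - x))` near `1`, which is not integrable. The
endpoint `-1` follows by applying this to `x ↦ f (-x)`.
-/
open MeasureTheory Set Filter Topology

section RightEndpoint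

variable {a b : ℝ} {E : Type*} [NormedAddCommGroup E]

theorem locallyIntegrableOn_Ioo_of_intervalIntegrable {g : ℝ → E}
    (hg : ∀ x ∈ Ioo a b, ∀ y ∈ Ioo a b, IntervalIntegrable g volume x y) :
    LocallyIntegrableOn g (Ioo a b) := by
  intro t ht
  obtain ⟨c, hac, hct⟩ := exists_between ht.1
  obtain ⟨d, htd, hdb⟩ := exists_between ht.2
  refine ⟨Icc c d, mem_nhdsWithin_of_mem_nhds (Icc_mem_nhds hct htd), ?_⟩
  exact (intervalIntegrable_iff_integrableOn_Icc_of_le (hct.trans htd).le).mp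
    (hg c ⟨hac, hct.trans ht.2⟩ d ⟨ht.1.trans htd, hdb⟩)

theorem two_mul_le_mul_sq_add_inv {w : ℝ} (hw : 0 < w) (x : ℝ) : 2 * x ≤ w * x ^ 2 + w⁻¹ := by
  have h : w * x ^ 2 + w⁻¹ - 2 * x = (w * x - 1) ^ 2 / w := by field_simp; ring
  nlinarith [div_nonneg (sq_nonneg (w * x - 1)) hw.le]

theorem integral_inv_sub_of_lt {y : ℝ} (hay : a ≤ y) (hyb : y < b) :
    ∫ t in a..y, (b - t)⁻¹ = Real.log (b - a) - Real.log (b - y) := by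
  rw [intervalIntegral.integral_comp_sub_left (fun t => t⁻¹), integral_inv, Real.log_div]
  · linarith
  · linarith
  · rw [uIcc_of_le (by linarith)]
    exact fun h => (not_le.2 (sub_pos.2 hyb)) h.1

theorem intervalIntegrable_log_sub :
    IntervalIntegrable (fun t => Real.log (b - t)) volume a b := by
  simpa using intervalIntegral.intervalIntegrable_log'.comp_sub_left (a := b - a) (b := 0) b

theorem eq_zero_of_tendsto_nhdsLT_of_integrableOn_div_sub {F : ℝ → E} {L : E} (hab : a < b)
    (hF : Tendsto F (𝓝[<] b) (𝓝 L))
    (hint : IntegrableOn (fun x => ‖F x‖ / (b - x)) (Ioo a b)) : L = 0 := by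
  by_contra hL
  have hL : 0 < ‖L‖ := norm_pos_iff.2 hL
  obtain ⟨c, hcb, hc⟩ := mem_nhdsLT_iff_exists_Ioo_subset.1
    (hF.norm.eventually (eventually_ge_nhds (half_lt_self hL)))
  set d := max a c
  have hdb : d < b := max_lt hab hcb
  have hinv : IntegrableOn (fun x => (b - x)⁻¹) (Ioo d b) := by
    refine ((hint.mono_set (Ioo_subset_Ioo_left (le_max_left a c))).const_mul (2 / ‖L‖)).mono'
      (by fun_prop) ?_
    filter_upwards [ae_restrict_mem measurableSet_Ioo] with x hx
    have hbx : 0 < b - x := sub_pos.2 hx.2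
    have hFx : ‖L‖ / 2 ≤ ‖F x‖ := hc ⟨(le_max_right a c).trans_lt hx.1, hx.2⟩
    rw [Real.norm_of_nonneg (inv_nonneg.2 hbx.le), mul_div_assoc', inv_eq_one_div,
      div_le_div_iff_of_pos_right hbx, div_mul_eq_mul_div, le_div_iff₀ hL]
    linarith
  have := ((intervalIntegrable_iff_integrableOn_Ioo_of_le hdb.le).2 hinv).neg
  simp only [Pi.neg_def, ← inv_neg, neg_sub] at this
  exact (intervalIntegrable_sub_inv_iff.1 this).elim hdb.ne (· right_mem_uIcc)

variable [NormedSpace ℝ E]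

theorem norm_sub_le_of_integrableOn_mul_norm_sq {g g' : ℝ → E} {w : ℝ → ℝ} {y : ℝ}
    (hy : y ∈ Ioo a b) (hg' : IntervalIntegrable g' volume a y)
    (hg : g y - g a = ∫ t in a..y, g' t)
    (hw : IntegrableOn (fun t => w t * ‖g' t‖ ^ 2) (Ioo a b))
    (hwb : ∀ t ∈ Ioo a b, b - t ≤ w t) :
    ‖g y - g a‖ ≤
      ((∫ t in Ioo a b, w t * ‖g' t‖ ^ 2) + Real.log (b - a) - Real.log (b - y)) / 2 := by
  have hsub : Ioo a y ⊆ Ioo a b := Ioo_subset_Ioo_right hy.2.le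
  have hwy : IntervalIntegrable (fun t => w t * ‖g' t‖ ^ 2) volume a y :=
    (intervalIntegrable_iff_integrableOn_Ioo_of_le hy.1.le).2 (hw.mono_set hsub)
  have hinv : IntervalIntegrable (fun t => (b - t)⁻¹) volume a y := by
    refine (continuousOn_const.sub continuousOn_id).inv₀ (fun t ht => ?_) |>.intervalIntegrable
    rw [uIcc_of_le hy.1.le] at ht
    exact (sub_pos.2 (ht.2.trans_lt hy.2)).ne'
  calc ‖g y - g a‖ ≤ ∫ t in a..y, ‖g' t‖ := by
        rw [hg]; exact intervalIntegral.norm_integral_le_integral_norm hy.1.le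
    _ ≤ ∫ t in a..y, (w t * ‖g' t‖ ^ 2 + (b - t)⁻¹) / 2 := by
        refine intervalIntegral.integral_mono_on_of_le_Ioo hy.1.le hg'.norm
          ((hwy.add hinv).div_const 2) fun t ht => ?_
        have hbt : 0 < b - t := by linarith [ht.2, hy.2]
        have hwt := hwb t (hsub ht)
        have := two_mul_le_mul_sq_add_inv (hbt.trans_le hwt) ‖g' t‖
        have := inv_anti₀ hbt hwt
        linarith
    _ = ((∫ t in a..y, w t * ‖g' t‖ ^ 2) + ∫ t in a..y, (b - t)⁻¹) / 2 := by
        rw [intervalIntegral.integral_div, intervalIntegral.integral_add hwy hinv]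
    _ ≤ _ := by
        rw [integral_inv_sub_of_lt hy.1.le hy.2, add_sub_assoc]
        gcongr
        rw [intervalIntegral.integral_of_le hy.1.le, integral_Ioc_eq_integral_Ioo]
        refine setIntegral_mono_set hw ?_ hsub.eventuallyLE
        filter_upwards [ae_restrict_mem measurableSet_Ioo] with t ht
        exact mul_nonneg ((sub_pos.2 ht.2).le.trans (hwb t ht)) (by positivity)

theorem integrableOn_of_integrableOn_mul_norm_sq_deriv {g g' : ℝ → E} {w : ℝ → ℝ}
    (hgm : AEStronglyMeasurable g (volume.restrict (Ioo a b)))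
    (hg' : ∀ y ∈ Ioo a b, IntervalIntegrable g' volume a y)
    (hg : ∀ y ∈ Ioo a b, g y - g a = ∫ t in a..y, g' t)
    (hw : IntegrableOn (fun t => w t * ‖g' t‖ ^ 2) (Ioo a b))
    (hwb : ∀ t ∈ Ioo a b, b - t ≤ w t) :
    IntegrableOn g (Ioo a b) := by
  rcases le_or_gt b a with hba | hab
  · simp [Ioo_eq_empty_of_le hba]
  set M := ∫ t in Ioo a b, w t * ‖g' t‖ ^ 2
  have hlog : IntegrableOn (fun y => Real.log (b - y)) (Ioo a b) :=
    (intervalIntegrable_iff_integrableOn_Ioo_of_le hab.le).1 intervalIntegrable_log_sub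
  have hbound : IntegrableOn (fun y => ‖g a‖ + (M + Real.log (b - a) - Real.log (b - y)) / 2)
      (Ioo a b) :=
    (integrableOn_const measure_Ioo_lt_top.ne).add
      (((integrableOn_const measure_Ioo_lt_top.ne).sub hlog).div_const 2)
  refine hbound.mono' hgm ?_
  filter_upwards [ae_restrict_mem measurableSet_Ioo] with y hy
  calc ‖g y‖ ≤ ‖g a‖ + ‖g y - g a‖ := norm_le_insert' _ _
    _ ≤ _ := by
      gcongr
      exact norm_sub_le_of_integrableOn_mul_norm_sq hy (hg' y hy) (hg y hy) hw hwb

theorem tendsto_nhdsLT_of_integrableOn {F g : ℝ → E} (hab : a < b)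
    (hg : IntegrableOn g (Ioo a b)) (hF : ∀ y ∈ Ioo a b, F y - F a = ∫ t in a..y, g t) :
    Tendsto F (𝓝[<] b) (𝓝 (F a + ∫ t in a..b, g t)) := by
  have hgab : IntegrableOn g (uIcc a b) := by
    rwa [uIcc_of_le hab.le, integrableOn_Icc_iff_integrableOn_Ioo]
  have hcont : ContinuousWithinAt (fun y => F a + ∫ t in a..y, g t) (Ioo a b) b :=
    (continuousOn_const.add (intervalIntegral.continuousOn_primitive_interval hgab) b
      right_mem_uIcc).mono (uIcc_of_le hab.le ▸ Ioo_subset_Icc_self)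
  rw [← nhdsWithin_Ioo_eq_nhdsLT hab]
  refine hcont.tendsto.congr' ?_
  filter_upwards [self_mem_nhdsWithin] with y hy
  rw [← hF y hy, add_sub_cancel]

end RightEndpoint

namespace InJacobiMaxDomain

variable {k : ℝ} {f f' f'' : ℝ → ℂ}

theorem integrableOn_one_sub_sq_mul_norm_sq (hf : InJacobiMaxDomain k f f' f'') :
    IntegrableOn (fun x => (1 - x ^ 2) * ‖f'' x‖ ^ 2) (Ioo (-1 : ℝ) 1) := by
  obtain ⟨-, hI2, -, -, hintf, hintl⟩ := hf
  have hm : AEStronglyMeasurable f'' (volume.restrict (Ioo (-1 : ℝ) 1)) :=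
    (locallyIntegrableOn_Ioo_of_intervalIntegrable hI2).aestronglyMeasurable
  refine ((hintl.const_mul 2).add (hintf.const_mul (2 * k ^ 2))).mono' (by fun_prop) ?_
  filter_upwards [ae_restrict_mem measurableSet_Ioo] with x hx
  have hw : 0 < 1 - x ^ 2 := by nlinarith [hx.1, hx.2]
  set A := -((1 - x ^ 2 : ℝ) : ℂ) * f'' x + (k : ℂ) * f x
  have hA : (1 - x ^ 2) * ‖f'' x‖ ≤ ‖A‖ + |k| * ‖f x‖ := by
    have h : ((1 - x ^ 2 : ℝ) : ℂ) * f'' x = (k : ℂ) * f x - A := by ring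
    have := norm_sub_le ((k : ℂ) * f x) A
    rw [← h, norm_mul, norm_mul, Complex.norm_real, Complex.norm_real, Real.norm_of_nonneg hw.le,
      Real.norm_eq_abs] at this
    linarith
  rw [Real.norm_of_nonneg (by positivity), Pi.add_apply]
  calc (1 - x ^ 2) * ‖f'' x‖ ^ 2 = ((1 - x ^ 2) * ‖f'' x‖) ^ 2 * (1 - x ^ 2)⁻¹ := by
        field_simp
    _ ≤ (‖A‖ + |k| * ‖f x‖) ^ 2 * (1 - x ^ 2)⁻¹ := by gcongr
    _ ≤ 2 * (‖A‖ ^ 2 + (|k| * ‖f x‖) ^ 2) * (1 - x ^ 2)⁻¹ := by gcongr; exact add_sq_le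
    _ = _ := by rw [mul_pow, sq_abs]; ring

theorem comp_neg (hf : InJacobiMaxDomain k f f' f'') :
    InJacobiMaxDomain k (fun x => f (-x)) (fun x => -f' (-x)) (fun x => f'' (-x)) := by
  obtain ⟨hI1, hI2, hftc1, hftc2, hintf, hintl⟩ := hf
  have hneg : ∀ x ∈ Ioo (-1 : ℝ) 1, -x ∈ Ioo (-1 : ℝ) 1 :=
    fun x hx => ⟨neg_lt_neg hx.2, by linarith [hx.1]⟩
  have hrefl : ∀ {h : ℝ → ℝ}, IntegrableOn h (Ioo (-1) 1) →
      IntegrableOn (fun x => h (-x)) (Ioo (-1) 1) := fun {h} hh => by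
    have := ((Measure.measurePreserving_neg volume).integrableOn_comp_preimage
      (Homeomorph.neg ℝ).measurableEmbedding).2 hh
    simpa [Function.comp_def, neg_Ioo] using this
  have hcomp : ∀ {g : ℝ → ℂ}, (∀ x ∈ Ioo (-1 : ℝ) 1, ∀ y ∈ Ioo (-1 : ℝ) 1,
      IntervalIntegrable g volume x y) → ∀ x ∈ Ioo (-1 : ℝ) 1, ∀ y ∈ Ioo (-1 : ℝ) 1,
      IntervalIntegrable (fun t => g (-t)) volume x y := fun hg x hx y hy => by
    simpa using (IntervalIntegrable.iff_comp_neg (by simp)).1 (hg _ (hneg x hx) _ (hneg y hy))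
  refine ⟨fun x hx y hy => (hcomp hI1 x hx y hy).neg, hcomp hI2, fun x hx y hy => ?_,
    fun x hx y hy => ?_, by simpa only [neg_sq] using hrefl hintf,
    by simpa only [neg_sq] using hrefl hintl⟩
  · rw [intervalIntegral.integral_neg, intervalIntegral.integral_comp_neg,
      ← intervalIntegral.integral_symm]
    exact hftc1 _ (hneg x hx) _ (hneg y hy)
  · rw [intervalIntegral.integral_comp_neg, intervalIntegral.integral_symm,
      ← hftc2 _ (hneg x hx) _ (hneg y hy)]
    ring

theorem tendsto_nhdsLT_one (hf : InJacobiMaxDomain k f f' f'') : Tendsto f (𝓝[<] 1) (𝓝 0) := by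
  have hw := hf.integrableOn_one_sub_sq_mul_norm_sq
  obtain ⟨hI1, hI2, hftc1, hftc2, hintf, -⟩ := hf
  have h0 : (0 : ℝ) ∈ Ioo (-1 : ℝ) 1 := by norm_num
  have hsub : Ioo (0 : ℝ) 1 ⊆ Ioo (-1) 1 := Ioo_subset_Ioo_left (by norm_num)
  have hf' : IntegrableOn f' (Ioo 0 1) :=
    integrableOn_of_integrableOn_mul_norm_sq_deriv
      ((locallyIntegrableOn_Ioo_of_intervalIntegrable hI1).aestronglyMeasurable.mono_measure
        (Measure.restrict_mono hsub le_rfl))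
      (fun y hy => hI2 0 h0 y (hsub hy)) (fun y hy => hftc2 0 h0 y (hsub hy))
      (hw.mono_set hsub) (fun t ht => by nlinarith [ht.1, ht.2])
  have hlim := tendsto_nhdsLT_of_integrableOn one_pos hf' fun y hy => hftc1 0 h0 y (hsub hy)
  have hint : IntegrableOn (fun x => ‖‖f x‖ ^ 2‖ / (1 - x)) (Ioo 0 1) := by
    refine ((hintf.mono_set hsub).mul_continuousOn_of_subset (g' := fun x => 1 + x)
      (by fun_prop) measurableSet_Ioo isCompact_Icc Ioo_subset_Icc_self).congr_fun
      (fun x hx => ?_) measurableSet_Ioo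
    have : 1 - x ≠ 0 := (sub_pos.2 hx.2).ne'
    have : 1 + x ≠ 0 := by linarith [hx.1]
    simp only [norm_pow, norm_norm, show (1 : ℝ) - x ^ 2 = (1 - x) * (1 + x) by ring]
    field_simp
  have hL := eq_zero_of_tendsto_nhdsLT_of_integrableOn_div_sub one_pos (hlim.norm.pow 2) hint
  rw [sq_eq_zero_iff, norm_eq_zero] at hL
  rwa [hL] at hlim

end InJacobiMaxDomain

theorem maxDomain_boundary_values_zero_general (k : ℝ) (f f' f'' : ℝ → ℂ)
    (hf : InJacobiMaxDomain k f f' f'') :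
    Tendsto f (𝓝[<] (1 : ℝ)) (𝓝 0) ∧ Tendsto f (𝓝[>] (-1 : ℝ)) (𝓝 0) :=
  ⟨hf.tendsto_nhdsLT_one,
    by simpa [Function.comp_def] using hf.comp_neg.tendsto_nhdsLT_one.comp tendsto_neg_nhdsGT_neg⟩

/-- Every `f` in the maximal domain `Δ` of the Jacobi expression satisfies
`lim_{x→1⁻} f(x) = 0` and `lim_{x→-1⁺} f(x) = 0`. -/
theorem maxDomain_boundary_values_zero (k : ℝ) (hk : 0 ≤ k) (f f' f'' : ℝ → ℂ)
    (hf : InJacobiMaxDomain k f f' f'') :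
    Tendsto f (𝓝[<] (1 : ℝ)) (𝓝 0) ∧ Tendsto f (𝓝[>] (-1 : ℝ)) (𝓝 0) :=
  maxDomain_boundary_values_zero_general k f f' f'' hf
end

section
/- For all f, g ∈ Δ, the maximal domain of the Jacobi expression ℓ[·] in L²((-1,1); (1-x²)^{-1}dx), Green's formula holds with vanishing boundary terms: ∫_{-1}^{1} ℓ[f](x)·ḡ(x)·(1-x²)^{-1}dx = ∫_{-1}^{1} f(x)·\overline{ℓ[g](x)}·(1-x²)^{-1}dx. That is, the maximal operator A given by Af = ℓ[f] on the domain Δ is symmetric in L²((-1,1); (1-x²)^{-1}dx). -/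
/-!
On `(-1, 1)` the two integrands differ by `f ḡ'' - f'' ḡ` (the `k`-terms cancel), which is the
derivative of the Wronskian `W = f ḡ' - f' ḡ`; so it suffices that `W → 0` at both endpoints.
Membership in `Δ` gives `(1 - x²) u'' ∈ L²((1 - x²)⁻¹ dx)`. Near `x = 1` this yields
`u' = O((1 - x) ^ (-1/4))`, so `u'` is integrable there and `u` has a limit at `1`, which must
vanish because `u ∈ L²((1 - x²)⁻¹ dx)`; integrating `u'` back from `1` gives
`u = O((1 - x) ^ (3/4))`. Hence `W = O((1 - x) ^ (1/2))`, and the endpoint `-1` follows by the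
reflection `x ↦ -x`.
-/

open MeasureTheory Set

open Filter Topology Asymptotics
open scoped Interval

lemma IsOpen.exists_uIcc_mem_nhds {s : Set ℝ} {x : ℝ} (hs : IsOpen s) (hx : x ∈ s) :
    ∃ a ∈ s, ∃ b ∈ s, [[a, b]] ⊆ s ∧ [[a, b]] ∈ 𝓝 x := by
  obtain ⟨a, b, hxab, hab, habs⟩ := exists_Icc_mem_subset_of_mem_nhds (hs.mem_nhds hx)
  rw [← uIcc_of_le (hxab.1.trans hxab.2)] at hab habs
  exact ⟨a, habs left_mem_uIcc, b, habs right_mem_uIcc, habs, hab⟩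

lemma integral_mul_integral_eq_integral_integral_mul {𝕜 : Type*} [RCLike 𝕜]
    {f g : ℝ → 𝕜} {a b : ℝ} (hab : a ≤ b) (hf : IntegrableOn f (Ioc a b))
    (hg : IntegrableOn g (Ioc a b)) :
    ∫ x in a..b, f x * ∫ t in a..x, g t = ∫ t in a..b, (∫ x in t..b, f x) * g t := by
  set K : ℝ → ℝ → 𝕜 := fun x t =>
    {z : ℝ × ℝ | z.2 < z.1}.indicator (fun z => f z.1 * g z.2) (x, t)
  have hK : Integrable (Function.uncurry K)
      ((volume.restrict (Ioc a b)).prod (volume.restrict (Ioc a b))) :=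
    (hf.mul_prod hg).indicator (measurableSet_lt measurable_snd measurable_fst)
  have inner : ∀ x ∈ Ioc a b, ∫ t in Ioc a b, K x t = f x * ∫ t in a..x, g t := by
    intro x hx
    have hset : Ioc a b ∩ Iio x = Ioo a x := by
      ext t; simp only [mem_inter_iff, mem_Ioc, mem_Iio, mem_Ioo]; grind
    have hKx : K x = (Iio x).indicator (fun t => f x * g t) := by
      ext t; simp [K, indicator_apply]
    rw [hKx, setIntegral_indicator measurableSet_Iio, hset, integral_const_mul,
      intervalIntegral.integral_of_le hx.1.le, integral_Ioc_eq_integral_Ioo]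
  have outer : ∀ t ∈ Ioc a b, ∫ x in Ioc a b, K x t = (∫ x in t..b, f x) * g t := by
    intro t ht
    have hset : Ioc a b ∩ Ioi t = Ioc t b := by
      ext x; simp only [mem_inter_iff, mem_Ioc, mem_Ioi]; grind
    have hKt : (fun x => K x t) = (Ioi t).indicator (fun x => f x * g t) := by
      ext x; simp [K, indicator_apply]
    rw [hKt, setIntegral_indicator measurableSet_Ioi, hset, integral_mul_const,
      intervalIntegral.integral_of_le ht.2]
  rw [intervalIntegral.integral_of_le hab, intervalIntegral.integral_of_le hab,
    ← setIntegral_congr_fun measurableSet_Ioc inner,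
    ← setIntegral_congr_fun measurableSet_Ioc outer]
  exact integral_integral_swap hK

/-- `F` is locally absolutely continuous on `s` with a.e. derivative `f`, in the form of the
fundamental theorem of calculus between any two points of `s`. -/
structure IsPrimitiveOn {E : Type*} [NormedAddCommGroup E] [NormedSpace ℝ E]
    (F f : ℝ → E) (s : Set ℝ) : Prop where
  intervalIntegrable : ∀ x ∈ s, ∀ y ∈ s, IntervalIntegrable f volume x y
  sub_eq_integral : ∀ x ∈ s, ∀ y ∈ s, F y - F x = ∫ t in x..y, f t

namespace IsPrimitiveOn

section NormedSpace

variable {E : Type*} [NormedAddCommGroup E] [NormedSpace ℝ E] {F f G g : ℝ → E} {s : Set ℝ}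
  {x y : ℝ}

lemma mono {t : Set ℝ} (h : IsPrimitiveOn F f s) (hts : t ⊆ s) : IsPrimitiveOn F f t :=
  ⟨fun x hx y hy => h.intervalIntegrable x (hts hx) y (hts hy),
    fun x hx y hy => h.sub_eq_integral x (hts hx) y (hts hy)⟩

lemma eq_add_integral (h : IsPrimitiveOn F f s) (hx : x ∈ s) (hy : y ∈ s) :
    F y = F x + ∫ t in x..y, f t := by
  rw [← h.sub_eq_integral x hx y hy, add_sub_cancel]

lemma neg (h : IsPrimitiveOn F f s) : IsPrimitiveOn (fun x => -F x) (fun x => -f x) s :=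
  ⟨fun x hx y hy => (h.intervalIntegrable x hx y hy).neg, fun x hx y hy => by
    rw [intervalIntegral.integral_neg, ← h.sub_eq_integral x hx y hy, neg_sub_neg, neg_sub]⟩

lemma sub (hF : IsPrimitiveOn F f s) (hG : IsPrimitiveOn G g s) :
    IsPrimitiveOn (fun x => F x - G x) (fun x => f x - g x) s :=
  ⟨fun x hx y hy => (hF.intervalIntegrable x hx y hy).sub (hG.intervalIntegrable x hx y hy),
    fun x hx y hy => by
      rw [intervalIntegral.integral_sub (hF.intervalIntegrable x hx y hy)
        (hG.intervalIntegrable x hx y hy), ← hF.sub_eq_integral x hx y hy,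
        ← hG.sub_eq_integral x hx y hy]
      abel⟩

lemma comp_neg (h : IsPrimitiveOn F f s) :
    IsPrimitiveOn (fun x => F (-x)) (fun x => -f (-x)) (-s) := by
  refine ⟨fun x hx y hy => ?_, fun x hx y hy => ?_⟩
  · have := h.intervalIntegrable (-x) hx (-y) hy
    rw [IntervalIntegrable.iff_comp_neg, neg_neg, neg_neg] at this
    exact this.neg
  · rw [intervalIntegral.integral_neg, intervalIntegral.integral_comp_neg,
      intervalIntegral.integral_symm, neg_neg, ← h.sub_eq_integral _ hx _ hy]

lemma continuousOn_uIcc (h : IsPrimitiveOn F f s) (hx : x ∈ s) (hy : y ∈ s)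
    (hxy : [[x, y]] ⊆ s) : ContinuousOn F [[x, y]] :=
  (continuousOn_const.add (intervalIntegral.continuousOn_primitive_interval'
    (h.intervalIntegrable x hx y hy) left_mem_uIcc)).congr
    fun _ hz => h.eq_add_integral hx (hxy hz)

lemma continuousOn (h : IsPrimitiveOn F f s) (hs : IsOpen s) : ContinuousOn F s := by
  intro x hx
  obtain ⟨a, ha, b, hb, habs, hab⟩ := hs.exists_uIcc_mem_nhds hx
  exact ((h.continuousOn_uIcc ha hb habs).continuousAt hab).continuousWithinAt

lemma locallyIntegrableOn (h : IsPrimitiveOn F f s) (hs : IsOpen s) :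
    LocallyIntegrableOn f s := by
  intro x hx
  obtain ⟨a, ha, b, hb, -, hab⟩ := hs.exists_uIcc_mem_nhds hx
  exact ⟨_, nhdsWithin_le_nhds hab,
    (intervalIntegrable_iff').mp (h.intervalIntegrable a ha b hb)⟩

lemma tendsto_nhdsWithin (h : IsPrimitiveOn F f s) {c e : ℝ} (hc : c ∈ s)
    (hf : IntervalIntegrable f volume c e) {t : Set ℝ} (ht : s ∩ [[c, e]] ∈ 𝓝[t] e) :
    Tendsto F (𝓝[t] e) (𝓝 (F c + ∫ x in c..e, f x)) := by
  have hG := intervalIntegral.continuousOn_primitive_interval' hf left_mem_uIcc e right_mem_uIcc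
  refine ((hG.mono_of_mem_nhdsWithin (mem_of_superset ht inter_subset_right)).tendsto.const_add
    (F c)).congr' ?_
  filter_upwards [ht] with y hy using (h.eq_add_integral hc hy.1).symm

lemma integral_Ioo_eq_sub_of_tendsto {a b : ℝ} {A B : E} (hab : a < b)
    (h : IsPrimitiveOn F f (Ioo a b)) (hf : IntegrableOn f (Ioo a b))
    (ha : Tendsto F (𝓝[>] a) (𝓝 A)) (hb : Tendsto F (𝓝[<] b) (𝓝 B)) :
    ∫ x in Ioo a b, f x = B - A := by
  set c := (a + b) / 2
  have hac : a < c := by simp only [c]; linarith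
  have hcb : c < b := by simp only [c]; linarith
  have hc : c ∈ Ioo a b := ⟨hac, hcb⟩
  have hfab : IntervalIntegrable f volume a b :=
    (intervalIntegrable_iff_integrableOn_Ioo_of_le hab.le).2 hf
  have hc' : c ∈ [[a, b]] := Icc_subset_uIcc (Ioo_subset_Icc_self hc)
  have hfca : IntervalIntegrable f volume c a :=
    hfab.mono_set (uIcc_subset_uIcc hc' left_mem_uIcc)
  have hfcb : IntervalIntegrable f volume c b :=
    hfab.mono_set (uIcc_subset_uIcc hc' right_mem_uIcc)
  have hA : A = F c + ∫ x in c..a, f x :=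
    tendsto_nhds_unique ha <| h.tendsto_nhdsWithin hc hfca <|
      mem_of_superset (Ioo_mem_nhdsGT hac) fun x hx =>
        ⟨⟨hx.1, hx.2.trans hcb⟩, Ioo_subset_Icc_self.trans Icc_subset_uIcc' hx⟩
  have hB : B = F c + ∫ x in c..b, f x :=
    tendsto_nhds_unique hb <| h.tendsto_nhdsWithin hc hfcb <|
      mem_of_superset (Ioo_mem_nhdsLT hcb) fun x hx =>
        ⟨⟨hac.trans hx.1, hx.2⟩, Ioo_subset_Icc_self.trans Icc_subset_uIcc hx⟩
  rw [← integral_Ioc_eq_integral_Ioo, ← intervalIntegral.integral_of_le hab.le,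
    ← intervalIntegral.integral_add_adjacent_intervals hfca.symm hfcb, hA, hB,
    intervalIntegral.integral_symm]
  abel

lemma norm_le_integral_of_tendsto_zero {g : ℝ → ℝ} {a b : ℝ} (h : IsPrimitiveOn F f (Ioo a b))
    (hF : Tendsto F (𝓝[<] b) (𝓝 0)) (hg : IntegrableOn g (Ioo a b))
    (hfg : ∀ t ∈ Ioo a b, ‖f t‖ ≤ g t) (hy : y ∈ Ioo a b) :
    ‖F y‖ ≤ ∫ t in y..b, g t := by
  have hsub : Ioo y b ⊆ Ioo a b := Ioo_subset_Ioo_left hy.1.le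
  have hfg' : ∀ᵐ t ∂volume.restrict (Ioo y b), ‖f t‖ ≤ g t :=
    (ae_restrict_iff' measurableSet_Ioo).2 (ae_of_all _ fun t ht => hfg t (hsub ht))
  have hfy : IntegrableOn f (Ioo y b) := (hg.mono_set hsub).mono'
    ((h.locallyIntegrableOn isOpen_Ioo).aestronglyMeasurable.mono_set hsub) hfg'
  have hlim := h.tendsto_nhdsWithin hy
    ((intervalIntegrable_iff_integrableOn_Ioo_of_le hy.2.le).2 hfy)
    (mem_of_superset (Ioo_mem_nhdsLT hy.2) fun t ht =>
      ⟨hsub ht, Ioo_subset_Icc_self.trans Icc_subset_uIcc ht⟩)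
  rw [eq_neg_of_add_eq_zero_left (tendsto_nhds_unique hlim hF), norm_neg,
    intervalIntegral.integral_of_le hy.2.le, intervalIntegral.integral_of_le hy.2.le,
    integral_Ioc_eq_integral_Ioo, integral_Ioc_eq_integral_Ioo]
  exact norm_integral_le_of_norm_le (hg.mono_set hsub) hfg'

end NormedSpace

section RCLike

variable {𝕜 : Type*} [RCLike 𝕜] {s : Set ℝ}

lemma integral_deriv_mul_add_mul_deriv {p p' q q' : ℝ → 𝕜} {a b : ℝ} (hab : a ≤ b)
    (hp : IsPrimitiveOn p p' (Icc a b)) (hq : IsPrimitiveOn q q' (Icc a b)) :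
    ∫ x in a..b, (p' x * q x + p x * q' x) = p b * q b - p a * q a := by
  have ha : a ∈ Icc a b := left_mem_Icc.2 hab
  have hb : b ∈ Icc a b := right_mem_Icc.2 hab
  have hab' : [[a, b]] = Icc a b := uIcc_of_le hab
  have hp' := hp.intervalIntegrable a ha b hb
  have hq' := hq.intervalIntegrable a ha b hb
  have hp'q : IntervalIntegrable (fun x => p' x * q x) volume a b :=
    hp'.mul_continuousOn (hq.continuousOn_uIcc ha hb hab'.subset)
  have hpq' : IntervalIntegrable (fun x => p x * q' x) volume a b :=
    hq'.continuousOn_mul (hp.continuousOn_uIcc ha hb hab'.subset)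
  have hL : ∫ x in a..b, p' x * ∫ t in a..x, q' t
      = (∫ x in a..b, p' x * q x) - (p b - p a) * q a := by
    rw [intervalIntegral.integral_congr (g := fun x => p' x * q x - p' x * q a),
      intervalIntegral.integral_sub hp'q (hp'.mul_const _), intervalIntegral.integral_mul_const,
      hp.sub_eq_integral a ha b hb]
    intro x hx
    rw [hab'] at hx
    simp only [← hq.sub_eq_integral a ha x hx, mul_sub]
  have hR : ∫ t in a..b, (∫ x in t..b, p' x) * q' t
      = p b * (q b - q a) - ∫ t in a..b, p t * q' t := by
    rw [intervalIntegral.integral_congr (g := fun t => p b * q' t - p t * q' t),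
      intervalIntegral.integral_sub (hq'.const_mul _) hpq', intervalIntegral.integral_const_mul,
      hq.sub_eq_integral a ha b hb]
    intro t ht
    rw [hab'] at ht
    simp only [← hp.sub_eq_integral t ht b hb, sub_mul]
  rw [intervalIntegral.integral_add hp'q hpq']
  linear_combination integral_mul_integral_eq_integral_integral_mul hab hp'.1 hq'.1 - hL + hR

lemma mul {p p' q q' : ℝ → 𝕜} [OrdConnected s] (hp : IsPrimitiveOn p p' s)
    (hq : IsPrimitiveOn q q' s) :
    IsPrimitiveOn (fun x => p x * q x) (fun x => p' x * q x + p x * q' x) s := by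
  have hle : ∀ x ∈ s, ∀ y ∈ s, x ≤ y →
      p y * q y - p x * q x = ∫ t in x..y, (p' t * q t + p t * q' t) := fun x hx y hy hxy =>
    ((hp.mono (Set.Icc_subset s hx hy)).integral_deriv_mul_add_mul_deriv hxy
      (hq.mono (Set.Icc_subset s hx hy))).symm
  refine ⟨fun x hx y hy => ?_, fun x hx y hy => ?_⟩
  · have hxy := OrdConnected.uIcc_subset ‹_› hx hy
    exact ((hp.intervalIntegrable x hx y hy).mul_continuousOn
      (hq.continuousOn_uIcc hx hy hxy)).add
      ((hq.intervalIntegrable x hx y hy).continuousOn_mul (hp.continuousOn_uIcc hx hy hxy))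
  · rcases le_total x y with hxy | hyx
    · exact hle x hx y hy hxy
    · rw [intervalIntegral.integral_symm, ← hle y hy x hx hyx, neg_sub]

lemma star {F f : ℝ → 𝕜} (h : IsPrimitiveOn F f s) :
    IsPrimitiveOn (fun x => star (F x)) (fun x => star (f x)) s := by
  refine ⟨fun x hx y hy => ?_, fun x hx y hy => ?_⟩
  · have hf := h.intervalIntegrable x hx y hy
    exact ⟨by simpa [IntegrableOn] using (RCLike.conjCLE (K := 𝕜)).integrable_comp_iff.2 hf.1,
      by simpa [IntegrableOn] using (RCLike.conjCLE (K := 𝕜)).integrable_comp_iff.2 hf.2⟩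
  · simp only [← starRingEnd_apply, intervalIntegral.intervalIntegral_conj, ← map_sub,
      h.sub_eq_integral x hx y hy]

end RCLike

end IsPrimitiveOn

lemma intervalIntegrable_one_sub_rpow {a b r : ℝ} (hr : -1 < r ∨ (1 : ℝ) ∉ [[a, b]]) :
    IntervalIntegrable (fun t => (1 - t) ^ r) volume a b := by
  rcases hr with hr | hr
  · simpa using
      (intervalIntegral.intervalIntegrable_rpow' (a := 1 - a) (b := 1 - b) hr).comp_sub_left 1
  · refine (ContinuousOn.rpow_const (by fun_prop) fun t ht => Or.inl ?_).intervalIntegrable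
    exact sub_ne_zero.2 fun h => hr (h ▸ ht)

lemma integral_one_sub_rpow {a b r : ℝ} (hr : -1 < r ∨ r ≠ -1 ∧ (1 : ℝ) ∉ [[a, b]]) :
    ∫ t in a..b, (1 - t) ^ r = ((1 - a) ^ (r + 1) - (1 - b) ^ (r + 1)) / (r + 1) := by
  rw [intervalIntegral.integral_comp_sub_left (fun t => t ^ r) 1, integral_rpow]
  refine hr.imp_right (And.imp_right fun h h0 => h ?_)
  rw [mem_uIcc] at h0 ⊢
  rcases h0 with ⟨h1, h2⟩ | ⟨h1, h2⟩
  · left; constructor <;> linarith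
  · right; constructor <;> linarith

lemma two_mul_le_sq_mul_inv_add_sq_mul (a b : ℝ) {c : ℝ} (hc : 0 < c) :
    2 * a * b ≤ a ^ 2 * c⁻¹ + b ^ 2 * c := by
  have h : 0 ≤ (a - b * c) ^ 2 * c⁻¹ := by positivity
  calc 2 * a * b = a ^ 2 * c⁻¹ + b ^ 2 * c - (a - b * c) ^ 2 * c⁻¹ := by field_simp; ring
    _ ≤ a ^ 2 * c⁻¹ + b ^ 2 * c := by linarith

lemma two_mul_le_sq_mul_one_sub_sq_add_rpow (a : ℝ) {s : ℝ} (hs : s ∈ Ico (0 : ℝ) 1) :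
    2 * a ≤ a ^ 2 * (1 - s ^ 2) + (1 - s) ^ (-(5 / 4) : ℝ) := by
  have hs1 : 0 < 1 - s := sub_pos.2 hs.2
  have hc : 0 < (1 - s) ^ (5 / 4 : ℝ) := Real.rpow_pos_of_pos hs1 _
  have hc_le : (1 - s) ^ (5 / 4 : ℝ) ≤ 1 - s ^ 2 := by
    calc (1 - s) ^ (5 / 4 : ℝ) ≤ (1 - s) ^ (1 : ℝ) :=
          Real.rpow_le_rpow_of_exponent_ge hs1 (by linarith [hs.1]) (by norm_num)
      _ ≤ 1 - s ^ 2 := by rw [Real.rpow_one]; nlinarith [hs.1, hs.2]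
  have := two_mul_le_sq_mul_inv_add_sq_mul a 1 (inv_pos.2 hc)
  rw [inv_inv, ← Real.rpow_neg hs1.le, one_pow, one_mul, mul_one] at this
  nlinarith [sq_nonneg a]

lemma one_sub_sq_pos {x : ℝ} (hx : x ∈ Ioo (-1 : ℝ) 1) : 0 < 1 - x ^ 2 := by
  nlinarith [hx.1, hx.2]

lemma eq_zero_of_tendsto_of_integrableOn_sq_div {E : Type*} [NormedAddCommGroup E]
    {u : ℝ → E} {L : E} (hu : Tendsto u (𝓝[<] 1) (𝓝 L))
    (hint : IntegrableOn (fun y => ‖u y‖ ^ 2 * (1 - y ^ 2)⁻¹) (Ioo (-1) 1)) : L = 0 := by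
  by_contra hL
  have hL' : 0 < ‖L‖ := norm_pos_iff.2 hL
  obtain ⟨c, hc1, hc⟩ := mem_nhdsLT_iff_exists_Ioo_subset.1
    ((hu.norm.eventually (lt_mem_nhds (half_lt_self hL'))).and
      (Ioo_mem_nhdsLT (show (0 : ℝ) < 1 by norm_num)))
  have hsub : Ioo c 1 ⊆ Ioo (-1) 1 := fun y hy => ⟨by linarith [(hc hy).2.1], hy.2⟩
  have hinv : IntegrableOn (fun y => (1 - y)⁻¹) (Ioo c 1) := by
    refine ((hint.mono_set hsub).const_mul (8 / ‖L‖ ^ 2)).mono'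
      (by fun_prop : Measurable fun y : ℝ => (1 - y)⁻¹).aestronglyMeasurable
      ((ae_restrict_iff' measurableSet_Ioo).2 (ae_of_all _ fun y hy => ?_))
    obtain ⟨hLu, hy0, hy1⟩ := hc hy
    have hy2 : 0 < 1 - y ^ 2 := by nlinarith
    rw [Real.norm_of_nonneg (inv_nonneg.2 (sub_pos.2 hy1).le)]
    calc (1 - y)⁻¹ ≤ 2 * (1 - y ^ 2)⁻¹ := by
          rw [← div_eq_mul_inv, inv_eq_one_div, div_le_div_iff₀ (sub_pos.2 hy1) hy2]; nlinarith
      _ ≤ 8 / ‖L‖ ^ 2 * (‖u y‖ ^ 2 * (1 - y ^ 2)⁻¹) := by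
          rw [← mul_assoc]
          refine mul_le_mul_of_nonneg_right ?_ (inv_nonneg.2 hy2.le)
          rw [div_mul_eq_mul_div, le_div_iff₀ (by positivity)]
          nlinarith
  have : IntervalIntegrable (fun y => (y - 1)⁻¹) volume c 1 := by
    convert ((intervalIntegrable_iff_integrableOn_Ioo_of_le hc1.le).2 hinv).neg using 1
    ext y; rw [Pi.neg_apply, ← inv_neg, neg_sub]
  rcases intervalIntegrable_sub_inv_iff.1 this with h | h
  · exact hc1.ne h
  · exact h right_mem_uIcc

lemma integrableOn_mul_star_mul_inv {φ ψ : ℝ → ℂ}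
    (hφm : AEStronglyMeasurable φ (volume.restrict (Ioo (-1) 1)))
    (hψm : AEStronglyMeasurable ψ (volume.restrict (Ioo (-1) 1)))
    (hφ : IntegrableOn (fun x => ‖φ x‖ ^ 2 * (1 - x ^ 2)⁻¹) (Ioo (-1) 1))
    (hψ : IntegrableOn (fun x => ‖ψ x‖ ^ 2 * (1 - x ^ 2)⁻¹) (Ioo (-1) 1)) :
    IntegrableOn (fun x => φ x * star (ψ x) * ((1 - x ^ 2 : ℝ) : ℂ)⁻¹) (Ioo (-1) 1) := by
  refine ((hφ.add hψ).div_const 2).mono' ((hφm.mul hψm.star).mul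
    (by fun_prop : Measurable fun x : ℝ => ((1 - x ^ 2 : ℝ) : ℂ)⁻¹).aestronglyMeasurable)
    ((ae_restrict_iff' measurableSet_Ioo).2 (ae_of_all _ fun x hx => ?_))
  have hw := one_sub_sq_pos hx
  rw [norm_mul, norm_mul, norm_star, norm_inv, Complex.norm_real, Real.norm_of_nonneg hw.le]
  have := mul_le_mul_of_nonneg_right (two_mul_le_add_sq ‖φ x‖ ‖ψ x‖) (inv_nonneg.2 hw.le)
  simp only [Pi.add_apply]
  linarith

/-- The maximal domain `Δ` with `ℓ[u] ∈ L²((1 - x²)⁻¹ dx)` replaced by the equivalent condition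
`(1 - x²) u'' ∈ L²((1 - x²)⁻¹ dx)`, which no longer involves `k`. -/
structure JacobiDomain (u u' u'' : ℝ → ℂ) : Prop where
  primitive : IsPrimitiveOn u u' (Ioo (-1) 1)
  primitive_deriv : IsPrimitiveOn u' u'' (Ioo (-1) 1)
  integrableOn_sq_div : IntegrableOn (fun x => ‖u x‖ ^ 2 * (1 - x ^ 2)⁻¹) (Ioo (-1) 1)
  integrableOn_sq_deriv2 : IntegrableOn (fun x => ‖u'' x‖ ^ 2 * (1 - x ^ 2)) (Ioo (-1) 1)

lemma InJacobiMaxDomain.jacobiDomain {k : ℝ} {f f' f'' : ℝ → ℂ}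
    (hf : InJacobiMaxDomain k f f' f'') : JacobiDomain f f' f'' := by
  obtain ⟨h₁, h₂, h₃, h₄, hf₂, hℓf₂⟩ := hf
  have hf' : IsPrimitiveOn f' f'' (Ioo (-1) 1) := ⟨h₂, h₄⟩
  refine ⟨⟨h₁, h₃⟩, hf', hf₂, ((hf₂.const_mul (2 * k ^ 2)).add (hℓf₂.const_mul 2)).mono'
    ((((hf'.locallyIntegrableOn isOpen_Ioo).aestronglyMeasurable.norm.pow 2).mul
      (by fun_prop : Measurable fun x : ℝ => 1 - x ^ 2).aestronglyMeasurable))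
    ((ae_restrict_iff' measurableSet_Ioo).2 (ae_of_all _ fun x hx => ?_))⟩
  have hw := one_sub_sq_pos hx
  set ℓf := -((1 - x ^ 2 : ℝ) : ℂ) * f'' x + (k : ℂ) * f x
  have hf'' : (1 - x ^ 2) * ‖f'' x‖ ≤ |k| * ‖f x‖ + ‖ℓf‖ := by
    have : ((1 - x ^ 2 : ℝ) : ℂ) * f'' x = (k : ℂ) * f x - ℓf := by simp only [ℓf]; ring
    calc (1 - x ^ 2) * ‖f'' x‖ = ‖((1 - x ^ 2 : ℝ) : ℂ) * f'' x‖ := by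
          rw [norm_mul, Complex.norm_real, Real.norm_of_nonneg hw.le]
      _ ≤ |k| * ‖f x‖ + ‖ℓf‖ := by
          rw [this]
          exact (norm_sub_le _ _).trans_eq (by rw [norm_mul, Complex.norm_real, Real.norm_eq_abs])
  rw [Real.norm_of_nonneg (by positivity)]
  calc ‖f'' x‖ ^ 2 * (1 - x ^ 2) = ((1 - x ^ 2) * ‖f'' x‖) ^ 2 * (1 - x ^ 2)⁻¹ := by
        field_simp
    _ ≤ (|k| * ‖f x‖ + ‖ℓf‖) ^ 2 * (1 - x ^ 2)⁻¹ := by gcongr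
    _ ≤ (2 * k ^ 2 * ‖f x‖ ^ 2 + 2 * ‖ℓf‖ ^ 2) * (1 - x ^ 2)⁻¹ := by
        gcongr; nlinarith [sq_nonneg (|k| * ‖f x‖ - ‖ℓf‖), sq_abs k]
    _ = _ := by simp only [Pi.add_apply, ℓf]; ring

namespace JacobiDomain

variable {u u' u'' v v' v'' : ℝ → ℂ}

lemma aestronglyMeasurable (hu : JacobiDomain u u' u'') :
    AEStronglyMeasurable u (volume.restrict (Ioo (-1) 1)) :=
  (hu.primitive.continuousOn isOpen_Ioo).aestronglyMeasurable measurableSet_Ioo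

lemma aestronglyMeasurable_deriv2 (hu : JacobiDomain u u' u'') :
    AEStronglyMeasurable u'' (volume.restrict (Ioo (-1) 1)) :=
  (hu.primitive_deriv.locallyIntegrableOn isOpen_Ioo).aestronglyMeasurable

lemma aestronglyMeasurable_jacobi (hu : JacobiDomain u u' u'') (k : ℝ) :
    AEStronglyMeasurable (fun x => -((1 - x ^ 2 : ℝ) : ℂ) * u'' x + (k : ℂ) * u x)
      (volume.restrict (Ioo (-1) 1)) :=
  ((by fun_prop : Measurable fun x : ℝ => -((1 - x ^ 2 : ℝ) : ℂ)).aestronglyMeasurable.mul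
    hu.aestronglyMeasurable_deriv2).add (aestronglyMeasurable_const.mul hu.aestronglyMeasurable)

lemma comp_neg (hu : JacobiDomain u u' u'') :
    JacobiDomain (fun x => u (-x)) (fun x => -u' (-x)) (fun x => u'' (-x)) := by
  have hI : -Ioo (-1 : ℝ) 1 = Ioo (-1) 1 := by rw [neg_Ioo, neg_neg]
  refine ⟨hI ▸ hu.primitive.comp_neg, ?_, ?_, ?_⟩
  · simpa only [hI, neg_neg] using hu.primitive_deriv.comp_neg.neg
  · simpa only [hI, neg_sq] using hu.integrableOn_sq_div.comp_neg
  · simpa only [hI, neg_sq] using hu.integrableOn_sq_deriv2.comp_neg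

lemma integrableOn_mul_deriv2 (hu : JacobiDomain u u' u'') (hv : JacobiDomain v v' v'') :
    IntegrableOn (fun x => u x * v'' x) (Ioo (-1) 1) := by
  refine ((hu.integrableOn_sq_div.add hv.integrableOn_sq_deriv2).div_const 2).mono'
    (hu.aestronglyMeasurable.mul hv.aestronglyMeasurable_deriv2)
    ((ae_restrict_iff' measurableSet_Ioo).2 (ae_of_all _ fun x hx => ?_))
  rw [norm_mul]
  have := two_mul_le_sq_mul_inv_add_sq_mul ‖u x‖ ‖v'' x‖ (one_sub_sq_pos hx)
  simp only [Pi.add_apply]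
  linarith

lemma two_mul_norm_deriv_le (hu : JacobiDomain u u' u'') {t : ℝ} (ht : t ∈ Ico (0 : ℝ) 1) :
    2 * ‖u' t‖ ≤ 2 * ‖u' 0‖ + (∫ x in Ioo (-1 : ℝ) 1, ‖u'' x‖ ^ 2 * (1 - x ^ 2)) +
      4 * ((1 - t) ^ (-(1 / 4) : ℝ) - 1) := by
  have h0 : (0 : ℝ) ∈ Ioo (-1) 1 := by norm_num
  have htI : t ∈ Ioo (-1 : ℝ) 1 := ⟨by linarith [ht.1], ht.2⟩
  have hsub : Ioc 0 t ⊆ Ioo (-1 : ℝ) 1 := fun s hs =>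
    ⟨by linarith [hs.1], hs.2.trans_lt ht.2⟩
  have hw : IntervalIntegrable (fun s => ‖u'' s‖ ^ 2 * (1 - s ^ 2)) volume 0 t :=
    (intervalIntegrable_iff_integrableOn_Ioc_of_le ht.1).2
      (hu.integrableOn_sq_deriv2.mono_set hsub)
  have h1t : (1 : ℝ) ∉ [[0, t]] := fun h => (uIcc_of_le ht.1 ▸ h).2.not_gt ht.2
  have hr : IntervalIntegrable (fun s => (1 - s) ^ (-(5 / 4) : ℝ)) volume 0 t :=
    intervalIntegrable_one_sub_rpow (Or.inr h1t)
  have hwI : ∫ s in 0..t, ‖u'' s‖ ^ 2 * (1 - s ^ 2) ≤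
      ∫ x in Ioo (-1 : ℝ) 1, ‖u'' x‖ ^ 2 * (1 - x ^ 2) := by
    rw [intervalIntegral.integral_of_le ht.1]
    exact setIntegral_mono_set hu.integrableOn_sq_deriv2
      ((ae_restrict_iff' measurableSet_Ioo).2 (ae_of_all _ fun x hx =>
        mul_nonneg (sq_nonneg _) (one_sub_sq_pos hx).le)) hsub.eventuallyLE
  have hrI : ∫ s in 0..t, (1 - s) ^ (-(5 / 4) : ℝ) = 4 * ((1 - t) ^ (-(1 / 4) : ℝ) - 1) := by
    rw [integral_one_sub_rpow (Or.inr ⟨by norm_num, h1t⟩),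
      show (-(5 / 4) : ℝ) + 1 = -(1 / 4) by norm_num, sub_zero, Real.one_rpow]
    ring
  -- AM-GM against `(1 - s) ^ (5 / 4) ≤ 1 - s ^ 2` bounds `‖u''‖` by the weighted `L²` density
  -- plus a power of `1 - s` whose integral grows only like `(1 - t) ^ (-1 / 4)`.
  have hu'' : 2 * ∫ s in 0..t, ‖u'' s‖ ≤
      ∫ s in 0..t, (‖u'' s‖ ^ 2 * (1 - s ^ 2) + (1 - s) ^ (-(5 / 4) : ℝ)) := by
    rw [← intervalIntegral.integral_const_mul]
    exact intervalIntegral.integral_mono_on ht.1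
      ((hu.primitive_deriv.intervalIntegrable 0 h0 t htI).norm.const_mul 2) (hw.add hr)
      fun s hs => two_mul_le_sq_mul_one_sub_sq_add_rpow _ ⟨hs.1, hs.2.trans_lt ht.2⟩
  rw [intervalIntegral.integral_add hw hr, hrI] at hu''
  have hu' : ‖u' t‖ ≤ ‖u' 0‖ + ∫ s in 0..t, ‖u'' s‖ := by
    rw [hu.primitive_deriv.eq_add_integral h0 htI]
    exact (norm_add_le _ _).trans
      (by gcongr; exact intervalIntegral.norm_integral_le_integral_norm ht.1)
  linarith

lemma isBigO_deriv (hu : JacobiDomain u u' u'') :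
    u' =O[𝓝[<] 1] fun t => (1 - t) ^ (-(1 / 4) : ℝ) := by
  set I := ∫ x in Ioo (-1 : ℝ) 1, ‖u'' x‖ ^ 2 * (1 - x ^ 2)
  have hI : 0 ≤ I := setIntegral_nonneg measurableSet_Ioo fun x hx =>
    mul_nonneg (sq_nonneg _) (one_sub_sq_pos hx).le
  refine IsBigO.of_bound (‖u' 0‖ + I / 2 + 2) ?_
  filter_upwards [Ico_mem_nhdsLT (show (0 : ℝ) < 1 by norm_num)] with t ht
  have hone : 1 ≤ (1 - t) ^ (-(1 / 4) : ℝ) :=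
    Real.one_le_rpow_of_pos_of_le_one_of_nonpos (by linarith [ht.2]) (by linarith [ht.1])
      (by norm_num)
  rw [Real.norm_of_nonneg (by positivity)]
  nlinarith [hu.two_mul_norm_deriv_le ht, mul_nonneg (norm_nonneg (u' 0)) (sub_nonneg.2 hone),
    mul_nonneg hI (sub_nonneg.2 hone)]

lemma isBigO (hu : JacobiDomain u u' u'') : u =O[𝓝[<] 1] fun t => (1 - t) ^ (3 / 4 : ℝ) := by
  obtain ⟨D, hD⟩ := hu.isBigO_deriv.bound
  obtain ⟨c₀, hc₀, hc₀D⟩ := mem_nhdsLT_iff_exists_Ioo_subset.1 hD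
  set c := max c₀ 0
  have hc : c ∈ Ioo (-1 : ℝ) 1 := ⟨by linarith [le_max_right c₀ 0], max_lt hc₀ one_pos⟩
  have hsub : Ioo c 1 ⊆ Ioo (-1) 1 := Ioo_subset_Ioo_left hc.1.le
  have hbound : ∀ t ∈ Ioo c 1, ‖u' t‖ ≤ D * (1 - t) ^ (-(1 / 4) : ℝ) := fun t ht => by
    have := hc₀D ⟨(le_max_left _ _).trans_lt ht.1, ht.2⟩
    rwa [mem_ofPred_eq, Real.norm_of_nonneg (Real.rpow_nonneg (sub_pos.2 ht.2).le _)] at this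
  have hg : IntegrableOn (fun t => D * (1 - t) ^ (-(1 / 4) : ℝ)) (Ioo c 1) :=
    (intervalIntegrable_iff_integrableOn_Ioo_of_le hc.2.le).1
      ((intervalIntegrable_one_sub_rpow (Or.inl (by norm_num))).const_mul D)
  have hu' : IntegrableOn u' (Ioo c 1) :=
    hg.mono' ((hu.primitive.locallyIntegrableOn isOpen_Ioo).aestronglyMeasurable.mono_set hsub)
      ((ae_restrict_iff' measurableSet_Ioo).2 (ae_of_all _ hbound))
  have hlim := hu.primitive.tendsto_nhdsWithin hc
    ((intervalIntegrable_iff_integrableOn_Ioo_of_le hc.2.le).2 hu')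
    (mem_of_superset (Ioo_mem_nhdsLT hc.2) fun t ht =>
      ⟨hsub ht, Ioo_subset_Icc_self.trans Icc_subset_uIcc ht⟩)
  rw [eq_zero_of_tendsto_of_integrableOn_sq_div hlim hu.integrableOn_sq_div] at hlim
  refine IsBigO.of_bound (D * (4 / 3)) ?_
  filter_upwards [Ioo_mem_nhdsLT hc.2] with y hy
  have := (hu.primitive.mono hsub).norm_le_integral_of_tendsto_zero hlim hg hbound hy
  rw [intervalIntegral.integral_const_mul, integral_one_sub_rpow (Or.inl (by norm_num)),
    show (-(1 / 4) : ℝ) + 1 = 3 / 4 by norm_num, sub_self, Real.zero_rpow (by norm_num),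
    sub_zero] at this
  rw [Real.norm_of_nonneg (Real.rpow_nonneg (sub_pos.2 hy.2).le _)]
  linarith

lemma tendsto_wronskian_nhdsLT_one (hu : JacobiDomain u u' u'') (hv : JacobiDomain v v' v'') :
    Tendsto (fun x => u x * v' x - u' x * v x) (𝓝[<] 1) (𝓝 0) := by
  have hW : (fun x => u x * v' x - u' x * v x) =O[𝓝[<] 1]
      fun t => (1 - t) ^ (3 / 4 : ℝ) * (1 - t) ^ (-(1 / 4) : ℝ) :=
    ((hu.isBigO.mul hv.isBigO_deriv).sub (hv.isBigO.mul hu.isBigO_deriv)).congr_left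
      fun x => by ring
  refine hW.trans_tendsto (Tendsto.congr' ?_ (tendsto_nhdsWithin_of_tendsto_nhds
    (((Real.continuous_rpow_const (by norm_num : (0 : ℝ) ≤ 1 / 2)).comp
      (continuous_sub_left 1)).tendsto' 1 0 (by norm_num))))
  filter_upwards [self_mem_nhdsWithin] with t (ht : t < 1)
  rw [Function.comp_apply, ← Real.rpow_add (sub_pos.2 ht)]
  norm_num

lemma tendsto_wronskian_nhdsGT_neg_one (hu : JacobiDomain u u' u'')
    (hv : JacobiDomain v v' v'') :
    Tendsto (fun x => u x * v' x - u' x * v x) (𝓝[>] (-1)) (𝓝 0) := by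
  have := ((hu.comp_neg.tendsto_wronskian_nhdsLT_one hv.comp_neg).comp
    tendsto_neg_nhdsGT_neg).neg
  rw [neg_zero] at this
  refine this.congr fun x => ?_
  simp only [Function.comp_apply, neg_neg]
  ring

lemma integral_mul_deriv2_sub_eq_zero (hu : JacobiDomain u u' u'') (hv : JacobiDomain v v' v'') :
    ∫ x in Ioo (-1 : ℝ) 1, (u x * v'' x - u'' x * v x) = 0 := by
  have hW : IsPrimitiveOn (fun x => u x * v' x - u' x * v x)
      (fun x => u x * v'' x - u'' x * v x) (Ioo (-1) 1) := by
    have hderiv : (fun x => u x * v'' x - u'' x * v x) =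
        fun x => (u' x * v' x + u x * v'' x) - (u'' x * v x + u' x * v' x) := by
      ext x; ring
    rw [hderiv]
    exact (hu.primitive.mul hv.primitive_deriv).sub (hu.primitive_deriv.mul hv.primitive)
  have hint : IntegrableOn (fun x => u x * v'' x - u'' x * v x) (Ioo (-1) 1) :=
    (hu.integrableOn_mul_deriv2 hv).sub ((hv.integrableOn_mul_deriv2 hu).congr_fun
      (fun x _ => mul_comm _ _) measurableSet_Ioo)
  simpa using hW.integral_Ioo_eq_sub_of_tendsto (by norm_num) hint
    (hu.tendsto_wronskian_nhdsGT_neg_one hv) (hu.tendsto_wronskian_nhdsLT_one hv)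

lemma star (hu : JacobiDomain u u' u'') :
    JacobiDomain (fun x => star (u x)) (fun x => star (u' x)) (fun x => star (u'' x)) :=
  ⟨hu.primitive.star, hu.primitive_deriv.star,
    by simpa only [norm_star] using hu.integrableOn_sq_div,
    by simpa only [norm_star] using hu.integrableOn_sq_deriv2⟩

end JacobiDomain

theorem greens_formula_symmetric_general (k : ℝ)
    (f f' f'' g g' g'' : ℝ → ℂ)
    (hf : InJacobiMaxDomain k f f' f'') (hg : InJacobiMaxDomain k g g' g'') :
    ∫ x in Ioo (-1 : ℝ) 1,
        (-((1 - x ^ 2 : ℝ) : ℂ) * f'' x + (k : ℂ) * f x) * star (g x) *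
          ((1 - x ^ 2 : ℝ) : ℂ)⁻¹ =
    ∫ x in Ioo (-1 : ℝ) 1,
        f x * star (-((1 - x ^ 2 : ℝ) : ℂ) * g'' x + (k : ℂ) * g x) *
          ((1 - x ^ 2 : ℝ) : ℂ)⁻¹ := by
  have hF := hf.jacobiDomain
  have hG := hg.jacobiDomain
  obtain ⟨-, -, -, -, hf₂, hℓf₂⟩ := hf
  obtain ⟨-, -, -, -, hg₂, hℓg₂⟩ := hg
  rw [← sub_eq_zero, ← integral_sub
    (integrableOn_mul_star_mul_inv (hF.aestronglyMeasurable_jacobi k) hG.aestronglyMeasurable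
      hℓf₂ hg₂)
    (integrableOn_mul_star_mul_inv hF.aestronglyMeasurable (hG.aestronglyMeasurable_jacobi k)
      hf₂ hℓg₂),
    ← hF.integral_mul_deriv2_sub_eq_zero hG.star]
  refine setIntegral_congr_fun measurableSet_Ioo fun x hx => ?_
  have hw : ((1 - x ^ 2 : ℝ) : ℂ) ≠ 0 := Complex.ofReal_ne_zero.2 (one_sub_sq_pos hx).ne'
  simp only [star_add, star_mul', star_neg, Complex.star_def, Complex.conj_ofReal]
  field_simp
  ring

/-- Green's formula with vanishing boundary terms: for all `f, g` in the maximal domain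
`Δ`, `∫ ℓ[f]·conj(g)·(1-x²)⁻¹ = ∫ f·conj(ℓ[g])·(1-x²)⁻¹`; i.e. the maximal operator
`A f = ℓ[f]` on `Δ` is symmetric in `L²((-1,1); (1-x²)⁻¹ dx)`. -/
theorem greens_formula_symmetric (k : ℝ) (hk : 0 ≤ k)
    (f f' f'' g g' g'' : ℝ → ℂ)
    (hf : InJacobiMaxDomain k f f' f'') (hg : InJacobiMaxDomain k g g' g'') :
    ∫ x in Ioo (-1 : ℝ) 1,
        (-((1 - x ^ 2 : ℝ) : ℂ) * f'' x + (k : ℂ) * f x) * star (g x) *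
          ((1 - x ^ 2 : ℝ) : ℂ)⁻¹ =
    ∫ x in Ioo (-1 : ℝ) 1,
        f x * star (-((1 - x ^ 2 : ℝ) : ℂ) * g'' x + (k : ℂ) * g x) *
          ((1 - x ^ 2 : ℝ) : ℂ)⁻¹ :=
  greens_formula_symmetric_general k f f' f'' g g' g'' hf hg
end
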